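/- arXiv:2401.07067 — 8 statements merged into one kernel-verified Lean document; each statement's English description precedes it below -/
import Mathlib

section
/- Let (X, 𝒜, μ) and (Y, ℬ, ν) be probability spaces, let η be a probability measure on (X × Y, 𝒜 ⊗ ℬ) and Φ ∈ L¹(η). Suppose Π_Φ(μ, ν; η) is nonempty. Let h : X × Y → ℝ be a bounded-from-below 𝒜 ⊗ ℬ-measurable function. Then the functional I_h(σ) = ∫ h dσ attains a minimum on Π_Φ(μ, ν; η). -/
open MeasureTheory

/-- The set `Π_Φ(μ, ν; η)` of transport plans with marginals `μ, ν` whose density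
with respect to `η` is bounded by `Φ`. -/
def PiPhi {X Y : Type*} [MeasurableSpace X] [MeasurableSpace Y]
    (μ : Measure X) (ν : Measure Y) (Φ : X × Y → ℝ) (η : Measure (X × Y)) :
    Set (Measure (X × Y)) :=
  {σ | σ.map Prod.fst = μ ∧ σ.map Prod.snd = ν ∧ σ ≪ η ∧
    ∀ᵐ p ∂η, σ.rnDeriv η p ≤ ENNReal.ofReal (Φ p)}

section Auxiliary

open Filter Set
open scoped ENNReal

private theorem exists_tendsto_of_nested {F : Type*} [NormedAddCommGroup F]
    [InnerProductSpace ℝ F] [CompleteSpace F]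
    (D : ℕ → Set F) (hne : ∀ n, (D n).Nonempty)
    (hdec : ∀ m n, m ≤ n → D n ⊆ D m)
    (hmid : ∀ n, ∀ x ∈ D n, ∀ y ∈ D n, (2:ℝ)⁻¹ • (x + y) ∈ D n)
    {R : ℝ} (hbdd : ∀ n, ∀ x ∈ D n, ‖x‖ ≤ R) :
    ∃ g : F, ∃ x : ℕ → F, (∀ n, x n ∈ D n) ∧ Tendsto x atTop (nhds g) := by
  -- the infimum of norms on D n
  set d : ℕ → ℝ := fun n => sInf (norm '' D n) with hd
  have hbb : ∀ n, BddBelow (norm '' D n) := by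
    intro n
    exact ⟨0, by rintro - ⟨y, -, rfl⟩; exact norm_nonneg y⟩
  have hdnonneg : ∀ n, 0 ≤ d n := by
    intro n
    apply le_csInf ((hne n).image _)
    rintro - ⟨y, -, rfl⟩; exact norm_nonneg y
  have hdle : ∀ n, ∀ x ∈ D n, d n ≤ ‖x‖ := by
    intro n x hx
    exact csInf_le (hbb n) ⟨x, hx, rfl⟩
  have hdleR : ∀ n, d n ≤ R := by
    intro n
    obtain ⟨x, hx⟩ := hne n
    exact (hdle n x hx).trans (hbdd n x hx)
  have hdmono : Monotone d := by
    intro a b hab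
    apply le_csInf ((hne b).image _)
    rintro - ⟨y, hy, rfl⟩
    exact csInf_le (hbb a) ⟨y, hdec a b hab hy, rfl⟩
  -- limit of the d n
  set dl : ℝ := ⨆ n, d n with hdl
  have hbdd' : BddAbove (Set.range d) := ⟨R, by rintro - ⟨n, rfl⟩; exact hdleR n⟩
  have hdtend : Tendsto d atTop (nhds dl) := tendsto_atTop_ciSup hdmono hbdd'
  have hdled : ∀ n, d n ≤ dl := fun n => le_ciSup hbdd' n
  have hdlnonneg : 0 ≤ dl := le_trans (hdnonneg 0) (hdled 0)
  -- choose x n ∈ D n with ‖x n‖ < d n + 1/(n+1)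
  have hchoice : ∀ n : ℕ, ∃ x ∈ D n, ‖x‖ < d n + 1 / (n + 1) := by
    intro n
    have h1 : d n < d n + 1 / (n + 1) := by
      have : (0:ℝ) < 1 / (n + 1) := by positivity
      linarith
    obtain ⟨-, ⟨y, hy, rfl⟩, hlt⟩ := exists_lt_of_csInf_lt ((hne n).image _) h1
    exact ⟨y, hy, hlt⟩
  choose x hxD hxlt using hchoice
  -- Cauchy estimate
  set b : ℕ → ℝ := fun N => Real.sqrt (4 * ((dl + 1 / (N + 1)) ^ 2 - d N ^ 2)) with hb
  have hkey : ∀ N k l, N ≤ k → N ≤ l → dist (x k) (x l) ≤ b N := by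
    intro N k l hk hl
    have hxk : x k ∈ D N := hdec N k hk (hxD k)
    have hxl : x l ∈ D N := hdec N l hl (hxD l)
    have hmidN := hmid N _ hxk _ hxl
    have hnorm_mid : d N ≤ (2:ℝ)⁻¹ * ‖x k + x l‖ := by
      have := hdle N _ hmidN
      rwa [norm_smul, norm_inv, Real.norm_ofNat] at this
    have hpar := parallelogram_law_with_norm ℝ (x k) (x l)
    have hxkb : ‖x k‖ ≤ dl + 1 / (N + 1) := by
      have h1 : (1:ℝ) / (k + 1) ≤ 1 / (N + 1) := by
        apply one_div_le_one_div_of_le (by positivity)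
        have : (N:ℝ) ≤ k := Nat.cast_le.mpr hk
        linarith
      have := (hxlt k).le
      have h2 := hdled k
      linarith
    have hxlb : ‖x l‖ ≤ dl + 1 / (N + 1) := by
      have h1 : (1:ℝ) / (l + 1) ≤ 1 / (N + 1) := by
        apply one_div_le_one_div_of_le (by positivity)
        have : (N:ℝ) ≤ l := Nat.cast_le.mpr hl
        linarith
      have := (hxlt l).le
      have h2 := hdled l
      linarith
    have hsq : ‖x k - x l‖ ^ 2 ≤ 4 * ((dl + 1 / (N + 1)) ^ 2 - d N ^ 2) := by
      have e1 : ‖x k‖ * ‖x k‖ ≤ (dl + 1 / (N + 1)) ^ 2 := by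
        rw [sq]; exact mul_le_mul hxkb hxkb (norm_nonneg _) (by positivity)
      have e2 : ‖x l‖ * ‖x l‖ ≤ (dl + 1 / (N + 1)) ^ 2 := by
        rw [sq]; exact mul_le_mul hxlb hxlb (norm_nonneg _) (by positivity)
      have e3 : (2 * d N) * (2 * d N) ≤ ‖x k + x l‖ * ‖x k + x l‖ := by
        have h2 : 2 * d N ≤ ‖x k + x l‖ := by
          rw [inv_mul_eq_div, le_div_iff₀ (show (0:ℝ) < 2 by norm_num)] at hnorm_mid
          linarith
        have h3 : 0 ≤ 2 * d N := by have := hdnonneg N; positivity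
        exact mul_le_mul h2 h2 h3 (norm_nonneg _)
      nlinarith [hpar]
    have hb0 : 0 ≤ 4 * ((dl + 1 / (N + 1)) ^ 2 - d N ^ 2) := le_trans (sq_nonneg _) hsq
    rw [dist_eq_norm]
    calc ‖x k - x l‖ = Real.sqrt (‖x k - x l‖ ^ 2) := by rw [Real.sqrt_sq (norm_nonneg _)]
      _ ≤ b N := Real.sqrt_le_sqrt hsq
  have hbtend : Tendsto b atTop (nhds 0) := by
    have h1 : Tendsto (fun N : ℕ => 4 * ((dl + 1 / (N + 1)) ^ 2 - d N ^ 2)) atTop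
        (nhds (4 * ((dl + 0) ^ 2 - dl ^ 2))) := by
      apply Tendsto.const_mul
      apply Tendsto.sub
      · exact (Tendsto.pow (tendsto_const_nhds.add tendsto_one_div_add_atTop_nhds_zero_nat) 2)
      · exact (hdtend.pow 2)
    have h2 : (4 : ℝ) * ((dl + 0) ^ 2 - dl ^ 2) = 0 := by ring
    rw [h2] at h1
    have h3 := (Real.continuous_sqrt.tendsto 0).comp h1
    rw [Real.sqrt_zero] at h3
    apply h3.congr
    intro N
    simp [hb, one_div]
  have hcauchy : CauchySeq x := cauchySeq_of_le_tendsto_0 b (fun n m N hn hm => hkey N n m hn hm) hbtend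
  obtain ⟨g, hg⟩ := cauchySeq_tendsto_of_complete hcauchy
  exact ⟨g, x, hxD, hg⟩

theorem exists_min_PiPhi {X Y : Type*} [MeasurableSpace X] [MeasurableSpace Y]
    (μ : Measure X) (ν : Measure Y) [IsProbabilityMeasure μ] [IsProbabilityMeasure ν]
    (η : Measure (X × Y)) [IsProbabilityMeasure η]
    (Φ : X × Y → ℝ) (hΦ : Integrable Φ η)
    (hne : (PiPhi μ ν Φ η).Nonempty)
    (h' : X × Y → ℝ) (hm : Measurable h') (hpos : ∀ p, 0 ≤ h' p) :
    ∃ σ ∈ PiPhi μ ν Φ η, ∀ π ∈ PiPhi μ ν Φ η,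
      ∫⁻ p, ENNReal.ofReal (h' p) ∂σ ≤ ∫⁻ p, ENNReal.ofReal (h' p) ∂π := by
  classical
  set S := PiPhi μ ν Φ η with hS
  set J : Measure (X × Y) → ℝ≥0∞ := fun π => ∫⁻ p, ENNReal.ofReal (h' p) ∂π with hJ
  -- measurable representative of Φ
  have hΦae : AEMeasurable Φ η := hΦ.aestronglyMeasurable.aemeasurable
  set Φm : X × Y → ℝ := hΦae.mk Φ with hΦmdef
  have hΦm_meas : Measurable Φm := hΦae.measurable_mk
  have hΦm_ae : Φ =ᵐ[η] Φm := hΦae.ae_eq_mk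
  -- the weight W and the measure ρ
  set W : X × Y → ℝ≥0∞ := fun p => 1 + ENNReal.ofReal (Φm p) with hWdef
  have hWmeas : Measurable W := measurable_const.add (ENNReal.measurable_ofReal.comp hΦm_meas)
  have hW1 : ∀ p, 1 ≤ W p := fun p => le_add_of_nonneg_right (zero_le) |>.trans_eq rfl
  have hWne0 : ∀ p, W p ≠ 0 := fun p => fun hc => by simpa [hc] using hW1 p
  have hWnetop : ∀ p, W p ≠ ∞ := fun p => by
    simp only [hWdef]
    exact ENNReal.add_ne_top.mpr ⟨ENNReal.one_ne_top, ENNReal.ofReal_ne_top⟩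
  set ρ : Measure (X × Y) := η.withDensity W with hρdef
  have hρη : ρ ≪ η := withDensity_absolutelyContinuous η W
  haveI hρfin : IsFiniteMeasure ρ := by
    constructor
    rw [hρdef, withDensity_apply _ MeasurableSet.univ, Measure.restrict_univ]
    have h1 : ∫⁻ p, W p ∂η = 1 + ∫⁻ p, ENNReal.ofReal (Φm p) ∂η := by
      rw [hWdef]
      rw [lintegral_add_left measurable_const]
      simp [measure_univ]
    rw [h1]
    have h2 : ∫⁻ p, ENNReal.ofReal (Φm p) ∂η = ∫⁻ p, ENNReal.ofReal (Φ p) ∂η :=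
      lintegral_congr_ae (by filter_upwards [hΦm_ae] with p hp; rw [hp])
    have h3 : ∫⁻ p, ENNReal.ofReal (Φ p) ∂η < ∞ := by
      have h4 := hΦ.2
      rw [hasFiniteIntegral_iff_norm] at h4
      refine lt_of_le_of_lt (lintegral_mono fun p => ?_) h4
      exact ENNReal.ofReal_le_ofReal (le_abs_self _)
    rw [h2]
    exact ENNReal.add_lt_top.mpr ⟨ENNReal.one_lt_top, h3⟩
  -- η is absolutely continuous wrt ρ as well
  have hηρ : η ≪ ρ := by
    refine Measure.AbsolutelyContinuous.mk fun s hs hρs => ?_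
    rw [hρdef, withDensity_apply _ hs] at hρs
    have h0 : ∀ᵐ p ∂η.restrict s, W p = 0 := (lintegral_eq_zero_iff hWmeas).mp hρs
    have h1 : ∀ᵐ _p ∂η.restrict s, False := by
      filter_upwards [h0] with p hp
      exact hWne0 p hp
    have h2 : η.restrict s = 0 := by
      rwa [Filter.eventually_false_iff_eq_bot, ae_eq_bot] at h1
    have h3 := congrArg (fun mm : Measure (X × Y) => mm s) h2
    simp only [Measure.restrict_apply hs, Set.inter_self, Measure.coe_zero, Pi.zero_apply] at h3
    exact h3
  -- the bound function ψ
  set ψ' : X × Y → ℝ≥0∞ := fun p => ENNReal.ofReal (Φm p) / W p with hψ'def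
  have hψ'meas : Measurable ψ' := (ENNReal.measurable_ofReal.comp hΦm_meas).div hWmeas
  have hψ'le1 : ∀ p, ψ' p ≤ 1 := by
    intro p
    rw [hψ'def]
    rw [ENNReal.div_le_iff (hWne0 p) (hWnetop p)]
    simpa [hWdef] using le_add_of_nonneg_left (zero_le 1)
  have hψ'netop : ∀ p, ψ' p ≠ ∞ := fun p => ((hψ'le1 p).trans_lt ENNReal.one_lt_top).ne
  set ψ : X × Y → ℝ := fun p => (ψ' p).toReal with hψdef
  have hψmeas : Measurable ψ := hψ'meas.ennreal_toReal
  have hψnonneg : ∀ p, 0 ≤ ψ p := fun p => ENNReal.toReal_nonneg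
  have hψle1 : ∀ p, ψ p ≤ 1 := fun p => by
    rw [hψdef]
    exact ENNReal.toReal_le_of_le_ofReal zero_le_one (by simpa using hψ'le1 p)
  have hψ'eq : ∀ p, ENNReal.ofReal (ψ p) = ψ' p := fun p => ENNReal.ofReal_toReal (hψ'netop p)
  have hWψ' : ∀ p, W p * ψ' p = ENNReal.ofReal (Φm p) := fun p =>
    ENNReal.mul_div_cancel (hWne0 p) (hWnetop p)
  have hψint : Integrable ψ ρ := by
    refine memLp_one_iff_integrable.mp ?_
    exact MemLp.of_bound hψmeas.aestronglyMeasurable 1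
      (Eventually.of_forall fun p => by rw [Real.norm_of_nonneg (hψnonneg p)]; exact hψle1 p)
  -- every member of S is a probability measure
  have hSprob : ∀ π ∈ S, IsProbabilityMeasure π := by
    rintro π ⟨h1, -, -, -⟩
    constructor
    have := congrArg (fun mm : Measure X => mm Set.univ) h1
    simpa [Measure.map_apply measurable_fst MeasurableSet.univ] using this
  -- representation of the members of S as densities wrt ρ
  have hmem : ∀ π ∈ S, ∃ gi : X × Y → ℝ≥0∞, Measurable gi ∧
      (∀ᵐ p ∂ρ, gi p ≤ ψ' p) ∧ ρ.withDensity gi = π := by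
    rintro π hπS
    obtain ⟨hπ1, hπ2, hπac, hπbd⟩ := hπS
    haveI : IsProbabilityMeasure π := hSprob π (by exact ⟨hπ1, hπ2, hπac, hπbd⟩)
    set f : X × Y → ℝ≥0∞ := π.rnDeriv η with hfdef
    have hfmeas : Measurable f := Measure.measurable_rnDeriv π η
    have hfΦm : f ≤ᵐ[η] fun p => ENNReal.ofReal (Φm p) := by
      filter_upwards [hπbd, hΦm_ae] with p hp1 hp2
      rw [← hp2]
      exact hp1
    refine ⟨fun p => f p / W p, hfmeas.div hWmeas, ?_, ?_⟩
    · have h1 : (fun p => f p / W p) ≤ᵐ[η] ψ' := by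
        filter_upwards [hfΦm] with p hp
        exact ENNReal.div_le_div_right hp _
      exact hρη.ae_le h1
    · rw [hρdef, ← withDensity_mul η (g := fun p => f p / W p) hWmeas (hfmeas.div hWmeas)]
      have heq : (W * fun p => f p / W p) = f := by
        funext p
        exact ENNReal.mul_div_cancel (hWne0 p) (hWnetop p)
      rw [heq, Measure.withDensity_rnDeriv_eq π η hπac]
  -- master: integral computation for densities
  have master : ∀ (gi : X × Y → ℝ≥0∞) (π : Measure (X × Y)), Measurable gi →
      (∀ᵐ p ∂ρ, gi p ≤ 1) → ρ.withDensity gi = π →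
      ∀ (u : X × Y → ℝ) (C : ℝ), Measurable u → (∀ p, 0 ≤ u p) → (∀ p, u p ≤ C) →
      Integrable (fun p => (gi p).toReal * u p) ρ ∧
        ∫ p, (gi p).toReal * u p ∂ρ = (∫⁻ p, ENNReal.ofReal (u p) ∂π).toReal := by
    intro gi π hgimeas hgile hπrep u C humeas hunn hubd
    have hint : Integrable (fun p => (gi p).toReal * u p) ρ := by
      refine memLp_one_iff_integrable.mp ?_
      refine MemLp.of_bound ((hgimeas.ennreal_toReal.mul humeas).aestronglyMeasurable) C ?_
      filter_upwards [hgile] with p hp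
      rw [Real.norm_of_nonneg (mul_nonneg ENNReal.toReal_nonneg (hunn p))]
      have h1 : (gi p).toReal ≤ 1 := by
        calc (gi p).toReal ≤ (1:ℝ≥0∞).toReal := ENNReal.toReal_mono ENNReal.one_ne_top hp
          _ = 1 := by simp
      calc (gi p).toReal * u p ≤ 1 * u p := mul_le_mul_of_nonneg_right h1 (hunn p)
        _ = u p := one_mul _
        _ ≤ C := hubd p
    refine ⟨hint, ?_⟩
    have h1 : ∫⁻ p, ENNReal.ofReal (u p) ∂π = ∫⁻ p, gi p * ENNReal.ofReal (u p) ∂ρ := by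
      rw [← hπrep, lintegral_withDensity_eq_lintegral_mul ρ hgimeas humeas.ennreal_ofReal]
      rfl
    have h2 : ENNReal.ofReal (∫ p, (gi p).toReal * u p ∂ρ) = ∫⁻ p, gi p * ENNReal.ofReal (u p) ∂ρ := by
      rw [ofReal_integral_eq_lintegral_ofReal hint
        (Eventually.of_forall fun p => mul_nonneg ENNReal.toReal_nonneg (hunn p))]
      apply lintegral_congr_ae
      filter_upwards [hgile] with p hp
      have hne : gi p ≠ ∞ := (hp.trans_lt ENNReal.one_lt_top).ne
      rw [ENNReal.ofReal_mul ENNReal.toReal_nonneg, ENNReal.ofReal_toReal hne]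
    rw [h1, ← h2,
      ENNReal.toReal_ofReal (integral_nonneg fun p => mul_nonneg ENNReal.toReal_nonneg (hunn p))]
  -- Lp space helpers
  have hindmul : ∀ (v : X × Y → ℝ) (s : Set (X × Y)), MeasurableSet s →
      ∫ p in s, v p ∂ρ = ∫ p, v p * s.indicator (fun _ => (1:ℝ)) p ∂ρ := by
    intro v s hs
    rw [← integral_indicator hs]
    congr 1
    funext p
    by_cases hp : p ∈ s <;> simp [hp]
  have hinner : ∀ (u : X × Y → ℝ) (hu : MemLp u 2 ρ) (G : Lp ℝ 2 ρ),
      ∫ p, G p * u p ∂ρ = @inner ℝ _ _ G (hu.toLp u) := by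
    intro u hu G
    rw [L2.inner_def]
    apply integral_congr_ae
    filter_upwards [hu.coeFn_toLp] with p hp
    rw [hp, RCLike.inner_apply, starRingEnd_apply, star_trivial, mul_comm]
  have hmix : ∀ (u : X × Y → ℝ) (hu : MemLp u 2 ρ) (G1 G2 : Lp ℝ 2 ρ),
      ∫ p, ((2:ℝ)⁻¹ • (G1 + G2) : Lp ℝ 2 ρ) p * u p ∂ρ
        = 2⁻¹ * (∫ p, G1 p * u p ∂ρ) + 2⁻¹ * (∫ p, G2 p * u p ∂ρ) := by
    intro u hu G1 G2
    rw [hinner u hu, hinner u hu, hinner u hu, real_inner_smul_left, inner_add_left]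
    ring
  have hlim : ∀ (u : X × Y → ℝ) (hu : MemLp u 2 ρ) (x : ℕ → Lp ℝ 2 ρ) (g : Lp ℝ 2 ρ),
      Tendsto x atTop (nhds g) →
      Tendsto (fun n => ∫ p, (x n) p * u p ∂ρ) atTop (nhds (∫ p, g p * u p ∂ρ)) := by
    intro u hu x g hx
    simp only [hinner u hu]
    exact hx.inner tendsto_const_nhds
  -- test functions
  have hu_ind : ∀ s : Set (X × Y), MeasurableSet s →
      MemLp (s.indicator fun _ => (1:ℝ)) 2 ρ := fun s hs =>
    memLp_indicator_const 2 hs 1 (Or.inr (measure_ne_top ρ s))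
  have hu_min : ∀ M : ℕ, MemLp (fun p => min (h' p) (M:ℝ)) 2 ρ := by
    intro M
    refine MemLp.of_bound ((hm.min measurable_const).aestronglyMeasurable) M ?_
    apply Eventually.of_forall; intro p
    rw [Real.norm_of_nonneg (le_min (hpos p) (Nat.cast_nonneg M))]
    exact min_le_right _ _
  -- the constraint sets
  set K : ℝ → Set (Lp ℝ 2 ρ) := fun b => {G |
    (∀ s : Set (X × Y), MeasurableSet s →
        0 ≤ ∫ p, G p * s.indicator (fun _ => (1:ℝ)) p ∂ρ ∧
        ∫ p, G p * s.indicator (fun _ => (1:ℝ)) p ∂ρ ≤ ∫ p in s, ψ p ∂ρ) ∧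
    (∀ A : Set X, MeasurableSet A →
        ∫ p, G p * ((A ×ˢ (univ : Set Y)).indicator (fun _ => (1:ℝ))) p ∂ρ = (μ A).toReal) ∧
    (∀ B : Set Y, MeasurableSet B →
        ∫ p, G p * (((univ : Set X) ×ˢ B).indicator (fun _ => (1:ℝ))) p ∂ρ = (ν B).toReal) ∧
    (∀ M : ℕ, ∫ p, G p * min (h' p) (M:ℝ) ∂ρ ≤ b)} with hK
  -- membership in K coming from transport plans
  have hKmem : ∀ π ∈ S, ∀ b : ℝ, J π ≠ ∞ → (J π).toReal ≤ b → (K b).Nonempty := by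
    intro π hπS b hJfin hJle
    obtain ⟨gi, hgimeas, hgiψ, hgirep⟩ := hmem π hπS
    obtain ⟨hπ1, hπ2, hπac, hπbd⟩ := hπS
    have hgile1 : ∀ᵐ p ∂ρ, gi p ≤ 1 := by
      filter_upwards [hgiψ] with p hp
      exact hp.trans (hψ'le1 p)
    set gR : X × Y → ℝ := fun p => (gi p).toReal with hgRdef
    have hgRmem : MemLp gR 2 ρ := by
      refine MemLp.of_bound hgimeas.ennreal_toReal.aestronglyMeasurable 1 ?_
      filter_upwards [hgile1] with p hp
      rw [Real.norm_of_nonneg ENNReal.toReal_nonneg]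
      calc (gi p).toReal ≤ (1:ℝ≥0∞).toReal := ENNReal.toReal_mono ENNReal.one_ne_top hp
        _ = 1 := by simp
    refine ⟨hgRmem.toLp gR, ?_⟩
    have hcoe : ∀ u : X × Y → ℝ, ∫ p, (hgRmem.toLp gR) p * u p ∂ρ = ∫ p, gR p * u p ∂ρ := by
      intro u
      apply integral_congr_ae
      filter_upwards [hgRmem.coeFn_toLp] with p hp
      rw [hp]
    -- values on indicators
    have hval_ind : ∀ s : Set (X × Y), MeasurableSet s →
        ∫ p, gR p * s.indicator (fun _ => (1:ℝ)) p ∂ρ = (π s).toReal := by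
      intro s hs
      have hind_meas : Measurable (s.indicator fun _ => (1:ℝ)) :=
        measurable_const.indicator hs
      have hind_nn : ∀ p, 0 ≤ s.indicator (fun _ => (1:ℝ)) p := fun p =>
        Set.indicator_nonneg (fun _ _ => zero_le_one) p
      have hind_bd : ∀ p, s.indicator (fun _ => (1:ℝ)) p ≤ 1 := fun p =>
        Set.indicator_le_self' (fun _ _ => zero_le_one) p |>.trans (by by_cases hp : p ∈ s <;> simp [hp])
      have h5 := (master gi π hgimeas hgile1 hgirep _ 1 hind_meas hind_nn (fun p => by by_cases hp : p ∈ s <;> simp [hp])).2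
      rw [h5]
      congr 1
      have heq : ∀ p, ENNReal.ofReal (s.indicator (fun _ => (1:ℝ)) p)
          = s.indicator (fun _ => (1:ℝ≥0∞)) p := by
        intro p; by_cases hp : p ∈ s <;> simp [hp]
      rw [lintegral_congr heq]
      exact lintegral_indicator_one hs
    have hπs_le : ∀ s : Set (X × Y), MeasurableSet s → (π s).toReal ≤ ∫ p in s, ψ p ∂ρ := by
      intro s hs
      have h1 : π s = ∫⁻ p in s, gi p ∂ρ := by rw [← hgirep, withDensity_apply _ hs]
      have h2 : ∫⁻ p in s, gi p ∂ρ ≤ ∫⁻ p in s, ψ' p ∂ρ :=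
        lintegral_mono_ae (ae_restrict_of_ae hgiψ)
      have h3 : ENNReal.ofReal (∫ p in s, ψ p ∂ρ) = ∫⁻ p in s, ψ' p ∂ρ := by
        rw [ofReal_integral_eq_lintegral_ofReal (hψint.restrict (s := s))
          (Eventually.of_forall fun p => hψnonneg p)]
        exact lintegral_congr fun p => hψ'eq p
      calc (π s).toReal ≤ (ENNReal.ofReal (∫ p in s, ψ p ∂ρ)).toReal := by
            apply ENNReal.toReal_mono ENNReal.ofReal_ne_top
            rw [h3, h1] at *
            exact h2.trans_eq rfl
        _ = ∫ p in s, ψ p ∂ρ :=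
            ENNReal.toReal_ofReal (setIntegral_nonneg hs fun p _ => hψnonneg p)
    refine ⟨fun s hs => ?_, fun A hA => ?_, fun B hB => ?_, fun M => ?_⟩
    · rw [hcoe, hval_ind s hs]
      exact ⟨ENNReal.toReal_nonneg, hπs_le s hs⟩
    · rw [hcoe, hval_ind _ (hA.prod MeasurableSet.univ)]
      have hpre : Prod.fst ⁻¹' A = A ×ˢ (univ : Set Y) := by ext p; simp
      rw [← hpre, ← Measure.map_apply measurable_fst hA, hπ1]
    · rw [hcoe, hval_ind _ (MeasurableSet.univ.prod hB)]
      have hpre : Prod.snd ⁻¹' B = (univ : Set X) ×ˢ B := by ext p; simp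
      rw [← hpre, ← Measure.map_apply measurable_snd hB, hπ2]
    · rw [hcoe]
      have h5 := (master gi π hgimeas hgile1 hgirep _ M (hm.min measurable_const)
        (fun p => le_min (hpos p) (Nat.cast_nonneg M)) (fun p => min_le_right _ _)).2
      rw [h5]
      have h6 : ∫⁻ p, ENNReal.ofReal (min (h' p) (M:ℝ)) ∂π ≤ J π :=
        lintegral_mono fun p => ENNReal.ofReal_le_ofReal (min_le_left _ _)
      exact (ENNReal.toReal_mono hJfin h6).trans hJle
  -- midpoint stability
  have hKmid : ∀ b : ℝ, ∀ G1 ∈ K b, ∀ G2 ∈ K b, (2:ℝ)⁻¹ • (G1 + G2) ∈ K b := by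
    rintro b G1 ⟨h11, h12, h13, h14⟩ G2 ⟨h21, h22, h23, h24⟩
    refine ⟨fun s hs => ?_, fun A hA => ?_, fun B hB => ?_, fun M => ?_⟩
    · rw [hmix _ (hu_ind s hs)]
      obtain ⟨ha1, hb1⟩ := h11 s hs
      obtain ⟨ha2, hb2⟩ := h21 s hs
      constructor
      · linarith
      · linarith
    · rw [hmix _ (hu_ind _ (hA.prod MeasurableSet.univ)), h12 A hA, h22 A hA]; ring
    · rw [hmix _ (hu_ind _ (MeasurableSet.univ.prod hB)), h13 B hB, h23 B hB]; ring
    · rw [hmix _ (hu_min M)]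
      have := h14 M
      have := h24 M
      linarith
  -- a.e. bounds from the constraints
  have haeb : ∀ G : Lp ℝ 2 ρ,
      (∀ s : Set (X × Y), MeasurableSet s →
        0 ≤ ∫ p, G p * s.indicator (fun _ => (1:ℝ)) p ∂ρ ∧
        ∫ p, G p * s.indicator (fun _ => (1:ℝ)) p ∂ρ ≤ ∫ p in s, ψ p ∂ρ) →
      (0 ≤ᵐ[ρ] ⇑G ∧ ⇑G ≤ᵐ[ρ] ψ) := by
    intro G hG1
    have hint : Integrable (⇑G) ρ := (Lp.memLp G).integrable one_le_two
    constructor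
    · apply ae_nonneg_of_forall_setIntegral_nonneg hint
      intro s hs _
      rw [hindmul _ s hs]
      exact (hG1 s hs).1
    · have key : ∀ s : Set (X × Y), MeasurableSet s → ρ s < ∞ →
          0 ≤ ∫ p in s, (ψ p - G p) ∂ρ := by
        intro s hs _
        rw [integral_sub hψint.integrableOn hint.integrableOn]
        have h7 := (hG1 s hs).2
        rw [hindmul (⇑G) s hs]
        linarith
      have h8 := ae_nonneg_of_forall_setIntegral_nonneg (hψint.sub hint) key
      filter_upwards [h8] with p hp
      simpa using hp
  -- norm bound
  set R : ℝ := ((ρ univ) ^ ((2:ℝ≥0∞).toReal⁻¹) * ENNReal.ofReal 1).toReal with hR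
  have hKbd : ∀ b : ℝ, ∀ G ∈ K b, ‖G‖ ≤ R := by
    rintro b G ⟨hG1, -, -, -⟩
    obtain ⟨h0, h1⟩ := haeb G hG1
    have hb : ∀ᵐ p ∂ρ, ‖G p‖ ≤ 1 := by
      filter_upwards [h0, h1] with p p0 p1
      rw [Real.norm_of_nonneg p0]
      exact p1.trans (hψle1 p)
    have h2 := eLpNorm_le_of_ae_bound (p := 2) (μ := ρ) hb
    rw [Lp.norm_def, hR]
    apply ENNReal.toReal_mono _ h2
    exact ENNReal.mul_ne_top
      (ENNReal.rpow_ne_top_of_nonneg (by norm_num) (measure_ne_top ρ univ))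
      ENNReal.ofReal_ne_top
  -- the infimum
  set m : ℝ≥0∞ := ⨅ π ∈ S, J π with hmdef
  have hmle : ∀ π ∈ S, m ≤ J π := fun π hπ => iInf₂_le π hπ
  by_cases hmtop : m = ∞
  · obtain ⟨σ, hσ⟩ := hne
    refine ⟨σ, hσ, fun π hπ => ?_⟩
    have h1 : J π = ∞ := top_le_iff.mp (hmtop ▸ hmle π hπ)
    have h2 : J σ ≤ J π := by rw [h1]; exact le_top
    exact h2
  set mR : ℝ := m.toReal with hmRdef
  -- minimizing sequence
  have hseq : ∀ n : ℕ, ∃ π ∈ S, J π ≤ m + ENNReal.ofReal (1/(n+1)) := by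
    intro n
    by_contra hcon
    push_neg at hcon
    have h1 : m + ENNReal.ofReal (1/(n+1)) ≤ m := by
      rw [hmdef]
      exact le_iInf₂ fun π hπ => (hcon π hπ).le
    have h2 : m < m + ENNReal.ofReal (1/(n+1)) := by
      apply ENNReal.lt_add_right hmtop
      refine (ENNReal.ofReal_pos.mpr ?_).ne'
      positivity
    exact absurd h1 (not_le.mpr h2)
  choose πseq hπseqS hπseqJ using hseq
  have hadd_ne_top : ∀ n : ℕ, m + ENNReal.ofReal (1/(n+1)) ≠ ∞ := fun n =>
    ENNReal.add_ne_top.mpr ⟨hmtop, ENNReal.ofReal_ne_top⟩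
  -- the nested family
  set D : ℕ → Set (Lp ℝ 2 ρ) := fun n => K (mR + 1/(n+1)) with hDdef
  have hDne : ∀ n, (D n).Nonempty := by
    intro n
    apply hKmem (πseq n) (hπseqS n)
    · exact ne_top_of_le_ne_top (hadd_ne_top n) (hπseqJ n)
    · calc (J (πseq n)).toReal ≤ (m + ENNReal.ofReal (1/(n+1))).toReal :=
          ENNReal.toReal_mono (hadd_ne_top n) (hπseqJ n)
        _ = mR + 1/(n+1) := by
          rw [ENNReal.toReal_add hmtop ENNReal.ofReal_ne_top,
            ENNReal.toReal_ofReal (by positivity)]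
  have hDdec : ∀ a b : ℕ, a ≤ b → D b ⊆ D a := by
    intro a b hab G hG
    obtain ⟨c1, c2, c3, c4⟩ := hG
    refine ⟨c1, c2, c3, fun M => ?_⟩
    refine (c4 M).trans ?_
    have h1 : (1:ℝ)/(b+1) ≤ 1/(a+1) := by
      apply one_div_le_one_div_of_le (by positivity)
      have : (a:ℝ) ≤ b := Nat.cast_le.mpr hab
      linarith
    linarith
  obtain ⟨g, xs, hxsD, hxs_tend⟩ := exists_tendsto_of_nested D hDne hDdec
    (fun n x hx y hy => hKmid _ x hx y hy) (fun n x hx => hKbd _ x hx)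
  -- pass the constraints to the limit
  have hg1 : ∀ s : Set (X × Y), MeasurableSet s →
      0 ≤ ∫ p, g p * s.indicator (fun _ => (1:ℝ)) p ∂ρ ∧
      ∫ p, g p * s.indicator (fun _ => (1:ℝ)) p ∂ρ ≤ ∫ p in s, ψ p ∂ρ := by
    intro s hs
    have ht := hlim _ (hu_ind s hs) xs g hxs_tend
    constructor
    · exact le_of_tendsto_of_tendsto' tendsto_const_nhds ht
        (fun n => ((hxsD n).1 s hs).1)
    · exact le_of_tendsto ht (Eventually.of_forall fun n => ((hxsD n).1 s hs).2)
  have hg2 : ∀ A : Set X, MeasurableSet A →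
      ∫ p, g p * ((A ×ˢ (univ : Set Y)).indicator (fun _ => (1:ℝ))) p ∂ρ = (μ A).toReal := by
    intro A hA
    have ht := hlim _ (hu_ind _ (hA.prod MeasurableSet.univ)) xs g hxs_tend
    have hconst : ∀ n : ℕ, ∫ p, (xs n) p * ((A ×ˢ (univ : Set Y)).indicator (fun _ => (1:ℝ))) p ∂ρ
        = (μ A).toReal := fun n => (hxsD n).2.1 A hA
    have := tendsto_nhds_unique ht (by simp only [hconst]; exact tendsto_const_nhds)
    exact this
  have hg3 : ∀ B : Set Y, MeasurableSet B →
      ∫ p, g p * (((univ : Set X) ×ˢ B).indicator (fun _ => (1:ℝ))) p ∂ρ = (ν B).toReal := by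
    intro B hB
    have ht := hlim _ (hu_ind _ (MeasurableSet.univ.prod hB)) xs g hxs_tend
    have hconst : ∀ n : ℕ, ∫ p, (xs n) p * (((univ : Set X) ×ˢ B).indicator (fun _ => (1:ℝ))) p ∂ρ
        = (ν B).toReal := fun n => (hxsD n).2.2.1 B hB
    exact tendsto_nhds_unique ht (by simp only [hconst]; exact tendsto_const_nhds)
  have hg4 : ∀ M : ℕ, ∫ p, g p * min (h' p) (M:ℝ) ∂ρ ≤ mR := by
    intro M
    have ht := hlim _ (hu_min M) xs g hxs_tend
    have hb : Tendsto (fun n : ℕ => mR + 1/(n+1)) atTop (nhds (mR + 0)) :=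
      tendsto_const_nhds.add tendsto_one_div_add_atTop_nhds_zero_nat
    rw [add_zero] at hb
    exact le_of_tendsto_of_tendsto' ht hb (fun n => (hxsD n).2.2.2 M)
  -- construct the optimal measure
  obtain ⟨hg0, hgψ⟩ := haeb g hg1
  have hgmeas : Measurable (⇑g) := (Lp.stronglyMeasurable g).measurable
  have hgint : Integrable (⇑g) ρ := (Lp.memLp g).integrable one_le_two
  set Gd : X × Y → ℝ≥0∞ := fun p => ENNReal.ofReal (g p) with hGddef
  have hGdmeas : Measurable Gd := hgmeas.ennreal_ofReal
  set σ : Measure (X × Y) := ρ.withDensity Gd with hσdef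
  have hσs : ∀ s : Set (X × Y), MeasurableSet s →
      σ s = ENNReal.ofReal (∫ p in s, g p ∂ρ) := by
    intro s hs
    rw [hσdef, withDensity_apply _ hs]
    exact (ofReal_integral_eq_lintegral_ofReal hgint.integrableOn
      (ae_restrict_of_ae hg0)).symm
  have hmarg1 : σ.map Prod.fst = μ := by
    refine Measure.ext fun A hA => ?_
    rw [Measure.map_apply measurable_fst hA]
    have hpre : Prod.fst ⁻¹' A = A ×ˢ (univ : Set Y) := by ext p; simp
    rw [hpre, hσs _ (hA.prod MeasurableSet.univ)]
    have h9 : ∫ p in A ×ˢ (univ : Set Y), g p ∂ρ = (μ A).toReal := by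
      rw [hindmul _ _ (hA.prod MeasurableSet.univ)]
      exact hg2 A hA
    rw [h9, ENNReal.ofReal_toReal (measure_ne_top μ A)]
  have hmarg2 : σ.map Prod.snd = ν := by
    refine Measure.ext fun B hB => ?_
    rw [Measure.map_apply measurable_snd hB]
    have hpre : Prod.snd ⁻¹' B = (univ : Set X) ×ˢ B := by ext p; simp
    rw [hpre, hσs _ (MeasurableSet.univ.prod hB)]
    have h9 : ∫ p in (univ : Set X) ×ˢ B, g p ∂ρ = (ν B).toReal := by
      rw [hindmul _ _ (MeasurableSet.univ.prod hB)]
      exact hg3 B hB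
    rw [h9, ENNReal.ofReal_toReal (measure_ne_top ν B)]
  have hσwd : σ = η.withDensity (W * Gd) := by
    rw [hσdef, hρdef, ← withDensity_mul η hWmeas hGdmeas]
  have hσac : σ ≪ η := by
    rw [hσwd]
    exact withDensity_absolutelyContinuous η _
  have hσrn : ∀ᵐ p ∂η, σ.rnDeriv η p ≤ ENNReal.ofReal (Φ p) := by
    have h11 : σ.rnDeriv η =ᵐ[η] W * Gd := by
      rw [hσwd]
      exact Measure.rnDeriv_withDensity η (hWmeas.mul hGdmeas)
    have h12 : ⇑g ≤ᶠ[ae η] ψ := hgψ.filter_mono hηρ.ae_le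
    filter_upwards [h11, h12, hΦm_ae] with p hp1 hp2 hp3
    rw [hp1]
    have h13 : Gd p ≤ ψ' p := by
      rw [hGddef, ← hψ'eq p]
      exact ENNReal.ofReal_le_ofReal hp2
    calc W p * Gd p ≤ W p * ψ' p := mul_le_mul_right h13 _
      _ = ENNReal.ofReal (Φm p) := hWψ' p
      _ = ENNReal.ofReal (Φ p) := by rw [← hp3]
  -- the cost of σ
  have hJσ : J σ ≤ m := by
    have h13 : J σ = ∫⁻ p, Gd p * ENNReal.ofReal (h' p) ∂ρ := by
      rw [hJ]
      simp only [hσdef]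
      rw [lintegral_withDensity_eq_lintegral_mul ρ hGdmeas hm.ennreal_ofReal]
      rfl
    set F : ℕ → (X × Y) → ℝ≥0∞ := fun M p => Gd p * ENNReal.ofReal (min (h' p) (M:ℝ)) with hFdef
    have hFmeas : ∀ M, Measurable (F M) := fun M =>
      hGdmeas.mul ((hm.min measurable_const).ennreal_ofReal)
    have hFmono : Monotone F := by
      intro a b hab p
      apply mul_le_mul_right
      apply ENNReal.ofReal_le_ofReal
      exact min_le_min le_rfl (Nat.cast_le.mpr hab)
    have hFsup : ∀ p, (⨆ M, F M p) = Gd p * ENNReal.ofReal (h' p) := by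
      intro p
      apply le_antisymm
      · exact iSup_le fun M => mul_le_mul_right
          (ENNReal.ofReal_le_ofReal (min_le_left _ _)) _
      · obtain ⟨M, hM⟩ := exists_nat_ge (h' p)
        have hmin : min (h' p) (M:ℝ) = h' p := min_eq_left hM
        have : Gd p * ENNReal.ofReal (h' p) = F M p := by rw [hFdef]; simp [hmin]
        rw [this]
        exact le_iSup (fun M : ℕ => F M p) M
    have h14 : ∫⁻ p, Gd p * ENNReal.ofReal (h' p) ∂ρ = ⨆ M, ∫⁻ p, F M p ∂ρ := by
      rw [← lintegral_iSup hFmeas hFmono]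
      exact lintegral_congr fun p : X × Y => (hFsup p).symm
    have h15 : ∀ M : ℕ, ∫⁻ p, F M p ∂ρ ≤ m := by
      intro M
      have hint2 : Integrable (fun p => g p * min (h' p) (M:ℝ)) ρ := by
        refine memLp_one_iff_integrable.mp ?_
        refine MemLp.of_bound (hgmeas.mul (hm.min measurable_const)).aestronglyMeasurable
          (M:ℝ) ?_
        filter_upwards [hg0, hgψ] with p p0 p1
        rw [Real.norm_of_nonneg (mul_nonneg p0 (le_min (hpos p) (Nat.cast_nonneg M)))]
        calc g p * min (h' p) (M:ℝ) ≤ 1 * (M:ℝ) := by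
              apply mul_le_mul (p1.trans (hψle1 p)) (min_le_right _ _)
                (le_min (hpos p) (Nat.cast_nonneg M)) zero_le_one
          _ = (M:ℝ) := one_mul _
      have h16 : ∫⁻ p, F M p ∂ρ = ENNReal.ofReal (∫ p, g p * min (h' p) (M:ℝ) ∂ρ) := by
        rw [ofReal_integral_eq_lintegral_ofReal hint2
          (by filter_upwards [hg0] with p hp; exact mul_nonneg hp (le_min (hpos p) (Nat.cast_nonneg M)))]
        apply lintegral_congr_ae
        filter_upwards [hg0] with p hp
        rw [hFdef]
        simp only
        rw [← ENNReal.ofReal_mul hp]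
      rw [h16]
      calc ENNReal.ofReal (∫ p, g p * min (h' p) (M:ℝ) ∂ρ) ≤ ENNReal.ofReal mR :=
            ENNReal.ofReal_le_ofReal (hg4 M)
        _ = m := by rw [hmRdef, ENNReal.ofReal_toReal hmtop]
    rw [h13, h14]
    exact iSup_le h15
  have hσS : σ ∈ S := ⟨hmarg1, hmarg2, hσac, hσrn⟩
  exact ⟨σ, hσS, fun π hπ => le_trans hJσ (hmle π hπ)⟩

end Auxiliary

section Main

open Filter Set
open scoped ENNReal

/-- Existence of an optimal solution to the Kantorovich problem with density constraints. -/
theorem existence_kantorovich_density_constraints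
    {X Y : Type*} [MeasurableSpace X] [MeasurableSpace Y]
    (μ : Measure X) (ν : Measure Y) [IsProbabilityMeasure μ] [IsProbabilityMeasure ν]
    (η : Measure (X × Y)) [IsProbabilityMeasure η]
    (Φ : X × Y → ℝ) (hΦ : Integrable Φ η)
    (hne : (PiPhi μ ν Φ η).Nonempty)
    (h : X × Y → ℝ) (hmeas : Measurable h) (hbdd : ∃ c : ℝ, ∀ p, c ≤ h p) :
    ∃ σ ∈ PiPhi μ ν Φ η, ∀ π ∈ PiPhi μ ν Φ η, ∫ p, h p ∂σ ≤ ∫ p, h p ∂π := by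
  obtain ⟨c, hc⟩ := hbdd
  set h' : X × Y → ℝ := fun p => h p - c with hh'
  have hm' : Measurable h' := hmeas.sub measurable_const
  have hpos : ∀ p, 0 ≤ h' p := fun p => sub_nonneg.mpr (hc p)
  set J : Measure (X × Y) → ℝ≥0∞ := fun π => ∫⁻ p, ENNReal.ofReal (h' p) ∂π with hJ
  obtain ⟨σ, hσS, hσmin⟩ := exists_min_PiPhi μ ν η Φ hΦ hne h' hm' hpos
  -- each element of PiPhi is a probability measure
  have hprob : ∀ π ∈ PiPhi μ ν Φ η, IsProbabilityMeasure π := by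
    rintro π ⟨h1, -, -, -⟩
    constructor
    have := congrArg (fun m : Measure X => m Set.univ) h1
    simpa [Measure.map_apply measurable_fst MeasurableSet.univ] using this
  -- integrability is equivalent to finiteness of J
  have hint_iff : ∀ π : Measure (X × Y), IsProbabilityMeasure π →
      (Integrable h π ↔ J π ≠ ∞) := by
    intro π hp
    have h1 : Integrable h π ↔ Integrable h' π := by
      constructor
      · intro hint; rw [hh']; exact hint.sub (integrable_const c)
      · intro hint
        have : h = fun p => h' p + c := by funext p; simp [hh']
        rw [this]; exact hint.add (integrable_const c)
    rw [h1]
    constructor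
    · intro hint
      rw [hJ]
      have := hint.2
      rw [hasFiniteIntegral_iff_norm] at this
      simp only [hJ]
      have heq : ∀ p, ENNReal.ofReal (h' p) = ENNReal.ofReal ‖h' p‖ := by
        intro p; rw [Real.norm_of_nonneg (hpos p)]
      have hfin : ∫⁻ p, ENNReal.ofReal (h' p) ∂π = ∫⁻ p, ENNReal.ofReal ‖h' p‖ ∂π := by
        apply lintegral_congr; intro p; rw [heq]
      rw [hfin]; exact this.ne
    · intro hfin
      refine ⟨hm'.aestronglyMeasurable, ?_⟩
      rw [hasFiniteIntegral_iff_norm]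
      have heq : ∀ p, ENNReal.ofReal ‖h' p‖ = ENNReal.ofReal (h' p) := by
        intro p; rw [Real.norm_of_nonneg (hpos p)]
      calc ∫⁻ p, ENNReal.ofReal ‖h' p‖ ∂π = ∫⁻ p, ENNReal.ofReal (h' p) ∂π := by
            apply lintegral_congr; intro p; rw [heq]
        _ < ∞ := lt_top_iff_ne_top.mpr hfin
  -- value of the integral for integrable h
  have hval : ∀ π : Measure (X × Y), IsProbabilityMeasure π → Integrable h π →
      ∫ p, h p ∂π = (J π).toReal + c := by
    intro π hp hint
    have h1 : Integrable h' π := by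
      rw [hh']; exact hint.sub (integrable_const c)
    have h2 : ∫ p, h p ∂π = ∫ p, h' p ∂π + c := by
      rw [hh']
      have : ∫ p, (h p - c) ∂π = ∫ p, h p ∂π - ∫ p, (c : ℝ) ∂π := integral_sub hint (integrable_const c)
      rw [this, integral_const]
      simp [measure_univ]
    rw [h2]
    congr 1
    rw [hJ]
    rw [integral_eq_lintegral_of_nonneg_ae (Eventually.of_forall hpos) hm'.aestronglyMeasurable]
  -- case analysis
  by_cases hall : ∀ π ∈ PiPhi μ ν Φ η, Integrable h π
  · refine ⟨σ, hσS, fun π hπ => ?_⟩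
    rw [hval σ (hprob σ hσS) (hall σ hσS), hval π (hprob π hπ) (hall π hπ)]
    have h1 := hσmin π hπ
    have h2 : J π ≠ ∞ := (hint_iff π (hprob π hπ)).mp (hall π hπ)
    have := ENNReal.toReal_mono h2 h1
    linarith
  · push_neg at hall
    obtain ⟨π₀, hπ₀S, hπ₀⟩ := hall
    have hJπ₀ : J π₀ = ∞ := by
      by_contra hcon
      exact hπ₀ ((hint_iff π₀ (hprob π₀ hπ₀S)).mpr hcon)
    have hπ₀val : ∫ p, h p ∂π₀ = 0 := integral_undef hπ₀
    by_cases hσint : Integrable h σ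
    · have hσval := hval σ (hprob σ hσS) hσint
      by_cases hσ0 : ∫ p, h p ∂σ ≤ 0
      · refine ⟨σ, hσS, fun π hπ => ?_⟩
        by_cases hint : Integrable h π
        · rw [hσval, hval π (hprob π hπ) hint]
          have h1 := hσmin π hπ
          have h2 : J π ≠ ∞ := (hint_iff π (hprob π hπ)).mp hint
          have := ENNReal.toReal_mono h2 h1
          rw [hσval] at hσ0
          linarith
        · rw [integral_undef hint]
          exact hσ0
      · push_neg at hσ0
        refine ⟨π₀, hπ₀S, fun π hπ => ?_⟩
        rw [hπ₀val]
        by_cases hint : Integrable h π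
        · have h1 := hσmin π hπ
          have h2 : J π ≠ ∞ := (hint_iff π (hprob π hπ)).mp hint
          have h3 := ENNReal.toReal_mono h2 h1
          rw [hval π (hprob π hπ) hint]
          rw [hσval] at hσ0
          linarith
        · rw [integral_undef hint]
    · -- σ not integrable: J σ = ∞, so J π = ∞ for all π, nothing integrable
      have hJσ : J σ = ∞ := by
        by_contra hcon
        exact hσint ((hint_iff σ (hprob σ hσS)).mpr hcon)
      refine ⟨σ, hσS, fun π hπ => ?_⟩
      have hJπ : J π = ∞ := by
        have h5 := hσmin π hπ
        have h6 : J σ ≤ J π := h5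
        rw [hJσ] at h6
        exact top_le_iff.mp h6
      have hπint : ¬ Integrable h π := by
        intro hcon
        exact (hint_iff π (hprob π hπ)).mp hcon hJπ
      rw [integral_undef hσint, integral_undef hπint]

end Main
end

section
/- Let X, Y be Souslin spaces and η a Borel probability measure on X × Y. For a Borel measurable function h : X × Y → ℝ the following are equivalent: (1) there exist a Borel set A ⊆ X × Y with η(A) > 0 and functions u : X → ℝ, v : Y → ℝ such that h(x,y) = u(x) + v(y) for all (x,y) ∈ A; (2) there exists a Borel set A ⊆ X × Y with η(A) > 0 such that for every n ∈ ℕ and all points x₁, …, xₙ ∈ X, y₁, …, yₙ ∈ Y satisfying (xᵢ, yᵢ) ∈ A and (x_{i+1}, yᵢ) ∈ A for all i ∈ {1, …, n} (with x_{n+1} := x₁), one has Σ_{i=1}^{n} h(xᵢ, yᵢ) = Σ_{i=1}^{n} h(x_{i+1}, yᵢ). -/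
open MeasureTheory

/-- A Souslin space: a topological space that is the image of a Polish space
under a continuous map. -/
def IsSouslinSpace (X : Type*) [TopologicalSpace X] : Prop :=
  ∃ (Z : Type) (tZ : TopologicalSpace Z), @PolishSpace Z tZ ∧
    ∃ f : Z → X, @Continuous Z X tZ _ f ∧ Function.Surjective f

/-- The cyclic successor on `Fin n`. -/
def cycSucc {n : ℕ} (i : Fin n) : Fin n := ⟨(i.1 + 1) % n, Nat.mod_lt _ i.pos⟩

lemma cycSucc_eq_add_one {m : ℕ} (i : Fin (m + 1)) : cycSucc i = i + 1 := by
  ext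
  simp only [cycSucc, Fin.add_def]
  rw [Nat.add_mod, Nat.mod_eq_of_lt i.isLt, Fin.val_one']

section Walks

variable {X Y : Type*} (S : X → Y → Prop) (h : X × Y → ℝ)

/-- Alternating walks in the bipartite graph given by `S`, with their weights. -/
inductive Wk : X → X → ℝ → Prop
  | nil (a : X) : Wk a a 0
  | cons {c : X} (a b : X) (y : Y) {w : ℝ} :
      S a y → S b y → Wk b c w → Wk a c (h (b, y) - h (a, y) + w)

variable {S h}

lemma Wk.cast {a b : X} {w w' : ℝ} (hw : Wk S h a b w) (e : w = w') : Wk S h a b w' :=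
  e ▸ hw

lemma Wk.single {a b : X} {y : Y} (ha : S a y) (hb : S b y) :
    Wk S h a b (h (b, y) - h (a, y)) :=
  (Wk.cons a b y ha hb (Wk.nil b)).cast (by ring)

lemma Wk.trans {a b c : X} {w w' : ℝ} (h1 : Wk S h a b w) (h2 : Wk S h b c w') :
    Wk S h a c (w + w') := by
  induction h1 with
  | nil => simpa using h2
  | cons a b y hay hby hw ih => exact (Wk.cons a b y hay hby (ih h2)).cast (by ring)

lemma Wk.symm {a b : X} {w : ℝ} (h1 : Wk S h a b w) : Wk S h b a (-w) := by
  induction h1 with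
  | nil => simpa using Wk.nil _
  | cons a b y hay hby hw ih =>
    exact (ih.trans (Wk.single hby hay)).cast (by ring)

lemma Wk.toFin {a b : X} {w : ℝ} (h1 : Wk S h a b w) :
    ∃ (n : ℕ) (x : Fin (n + 1) → X) (y : Fin n → Y),
      x 0 = a ∧ x (Fin.last n) = b ∧
      (∀ i, S (x i.castSucc) (y i) ∧ S (x i.succ) (y i)) ∧
      w = ∑ i, (h (x i.succ, y i) - h (x i.castSucc, y i)) := by
  induction h1 with
  | nil a => exact ⟨0, fun _ => a, Fin.elim0, rfl, rfl, fun i => i.elim0, by simp⟩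
  | cons a b y0 hay hby hw ih =>
    obtain ⟨n, x, y, hx0, hxl, hstep, hsum⟩ := ih
    refine ⟨n + 1, Fin.cons a x, Fin.cons y0 y, rfl, ?_, ?_, ?_⟩
    · rw [← Fin.succ_last, Fin.cons_succ]; exact hxl
    · intro i
      refine Fin.cases ?_ (fun j => ?_) i
      · simpa [Fin.succ_zero_eq_one, hx0] using ⟨hay, hby⟩
      · constructor
        · rw [← Fin.succ_castSucc, Fin.cons_succ, Fin.cons_succ]
          exact (hstep j).1
        · simpa only [Fin.cons_succ] using (hstep j).2
    · rw [Fin.sum_univ_succ]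
      simp only [Fin.cons_succ, Fin.cons_zero, Fin.succ_zero_eq_one]
      have h1 : (Fin.cons (α := fun _ => X) a x : Fin (n+2) → X) 1 = x 0 := by
        rw [show (1 : Fin (n+2)) = Fin.succ 0 from rfl, Fin.cons_succ]
      rw [h1, hx0]
      have h2 : ∀ j : Fin n,
          (Fin.cons (α := fun _ => X) a x : Fin (n+2) → X) (Fin.succ (Fin.castSucc j)) =
            x j.castSucc := fun j => Fin.cons_succ _ _ _
      have h3 : ∀ j : Fin n,
          (Fin.cons (α := fun _ => X) a x : Fin (n+2) → X) (Fin.succ (Fin.succ j)) =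
            x j.succ := fun j => Fin.cons_succ _ _ _
      rw [hsum]
      congr 1

end Walks

/-- A Borel function `h` coincides with a sum `u(x) + v(y)` on a Borel set of positive
measure iff there is a Borel set of positive measure on which all cyclic sums of `h`
coincide. -/
theorem degenerate_iff_cyclic_sums
    {X Y : Type*} [TopologicalSpace X] [TopologicalSpace Y]
    [MeasurableSpace X] [BorelSpace X] [MeasurableSpace Y] [BorelSpace Y]
    (hX : IsSouslinSpace X) (hY : IsSouslinSpace Y)
    (η : Measure (X × Y)) [IsProbabilityMeasure η]
    (h : X × Y → ℝ) (hmeas : Measurable h) :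
    (∃ A : Set (X × Y), MeasurableSet A ∧ 0 < η A ∧
      ∃ (u : X → ℝ) (v : Y → ℝ), ∀ p ∈ A, h p = u p.1 + v p.2) ↔
    (∃ A : Set (X × Y), MeasurableSet A ∧ 0 < η A ∧
      ∀ (n : ℕ) (x : Fin n → X) (y : Fin n → Y),
        (∀ i, (x i, y i) ∈ A ∧ (x (cycSucc i), y i) ∈ A) →
        ∑ i, h (x i, y i) = ∑ i, h (x (cycSucc i), y i)) := by
  classical
  constructor
  · rintro ⟨A, mA, hpos, u, v, huv⟩
    refine ⟨A, mA, hpos, fun n x y hmem => ?_⟩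
    have e1 : ∀ i, h (x i, y i) = u (x i) + v (y i) := fun i => huv _ (hmem i).1
    have e2 : ∀ i, h (x (cycSucc i), y i) = u (x (cycSucc i)) + v (y i) :=
      fun i => huv _ (hmem i).2
    simp only [e1, e2, Finset.sum_add_distrib]
    congr 1
    cases n with
    | zero => simp
    | succ m =>
      simp only [cycSucc_eq_add_one]
      exact Fintype.sum_equiv (Equiv.subRight (1 : Fin (m + 1))) _ _ (fun i => by simp)
  · rintro ⟨A, mA, hpos, hcyc⟩
    set S : X → Y → Prop := fun x y => (x, y) ∈ A with hS
    -- Every closed walk has weight zero.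
    have closed : ∀ (a : X) (w : ℝ), Wk S h a a w → w = 0 := by
      intro a w hw
      obtain ⟨n, x, y, hx0, hxl, hstep, hsum⟩ := hw.toFin
      have key : ∀ i : Fin n, x (cycSucc i).castSucc = x i.succ := by
        intro i
        by_cases hi : i.1 + 1 < n
        · congr 1
          ext
          simp [cycSucc, Nat.mod_eq_of_lt hi]
        · have hn : i.1 + 1 = n := by omega
          have e0 : (cycSucc i).castSucc = 0 := by
            ext; simp [cycSucc, hn]
          have el : i.succ = Fin.last n := by ext; simpa using hn
          rw [e0, el, hx0, hxl]
      have := hcyc n (fun i => x i.castSucc) y (fun i => ⟨(hstep i).1, by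
        show S (x (cycSucc i).castSucc) (y i)
        rw [key i]; exact (hstep i).2⟩)
      have hsum2 : ∑ i, h (x (cycSucc i).castSucc, y i) = ∑ i, h (x i.succ, y i) :=
        Finset.sum_congr rfl fun i _ => by rw [key i]
      rw [hsum, Finset.sum_sub_distrib]
      rw [hsum2] at this
      linarith
    have unique : ∀ (a b : X) (w w' : ℝ), Wk S h a b w → Wk S h a b w' → w = w' := by
      intro a b w w' h1 h2
      have := closed a (w + -w') (h1.trans h2.symm)
      linarith
    -- Setoid of connectivity.
    have stdrel : Equivalence fun a b : X => ∃ w, Wk S h a b w :=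
      ⟨fun a => ⟨0, Wk.nil a⟩, fun ⟨w, hw⟩ => ⟨-w, hw.symm⟩,
        fun ⟨w, hw⟩ ⟨w', hw'⟩ => ⟨w + w', hw.trans hw'⟩⟩
    let std : Setoid X := ⟨_, stdrel⟩
    let rep : X → X := fun a => (Quotient.mk std a).out
    have hrep : ∀ a, ∃ w, Wk S h (rep a) a w := fun a => Quotient.mk_out (s := std) a
    let u : X → ℝ := fun a => (hrep a).choose
    have hu : ∀ a, Wk S h (rep a) a (u a) := fun a => (hrep a).choose_spec
    have keyu : ∀ (a b : X) (y : Y), S a y → S b y →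
        u b = u a + (h (b, y) - h (a, y)) := by
      intro a b y hay hby
      have hab : Wk S h a b (h (b, y) - h (a, y)) := Wk.single hay hby
      have hrepeq : rep a = rep b :=
        congrArg Quotient.out (Quotient.sound (⟨_, hab⟩ : std.r a b))
      have : Wk S h (rep b) b (u a + (h (b, y) - h (a, y))) := by
        rw [← hrepeq]; exact (hu a).trans hab
      exact unique _ _ _ _ (hu b) this
    let v : Y → ℝ := fun y =>
      if hy : ∃ a, S a y then h (hy.choose, y) - u hy.choose else 0
    refine ⟨A, mA, hpos, u, v, ?_⟩
    rintro ⟨x, y⟩ hp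
    have hxy : S x y := hp
    have hy : ∃ a, S a y := ⟨x, hxy⟩
    have hv : v y = h (hy.choose, y) - u hy.choose := by
      simp only [v, dif_pos hy]
    have := keyu hy.choose x y hy.choose_spec hxy
    show h (x, y) = u x + v y
    rw [hv]
    linarith
end

section
/- Let X, Y be Souslin spaces, η₁ a Borel probability measure on X, η₂ a Borel probability measure on Y, and η = η₁ ⊗ η₂. For a Borel measurable function h : X × Y → ℝ the following are equivalent: (1) there exist universally measurable functions u : X → ℝ and v : Y → ℝ such that η({(x,y) ∈ X × Y : h(x,y) = u(x) + v(y)}) > 0; (2) there exists a Borel set A ⊆ X × Y with η(A) > 0 such that for all x₁, x₂ ∈ X and y₁, y₂ ∈ Y with (x₁,y₁), (x₁,y₂), (x₂,y₁), (x₂,y₂) ∈ A, one has h(x₁,y₁) + h(x₂,y₂) = h(x₁,y₂) + h(x₂,y₁). -/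
open MeasureTheory

/-- A universally measurable function: preimages of Borel sets are measurable with
respect to the completion of every Borel probability measure. -/
def UniversallyMeasurable {X : Type*} [MeasurableSpace X] (u : X → ℝ) : Prop :=
  ∀ μ : Measure X, IsProbabilityMeasure μ →
    ∀ s : Set ℝ, MeasurableSet s → NullMeasurableSet (u ⁻¹' s) μ

section Aux

open Set
open scoped ENNReal

variable {X Y : Type*} [MeasurableSpace X] [MeasurableSpace Y]

/-- Cauchy–Schwarz for lintegrals against a probability measure. -/
lemma sq_lintegral_le_lintegral_sq {α : Type*} [MeasurableSpace α]
    (P : Measure α) [IsProbabilityMeasure P] {f : α → ℝ≥0∞}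
    (hf : Measurable f) : (∫⁻ a, f a ∂P) ^ 2 ≤ ∫⁻ a, (f a) ^ 2 ∂P := by
  have hpq : Real.HolderConjugate 2 2 := Real.HolderConjugate.two_two
  have H := ENNReal.lintegral_mul_le_Lp_mul_Lq P hpq hf.aemeasurable
    (aemeasurable_const (b := (1:ℝ≥0∞)))
  simp only [Pi.mul_apply, mul_one, ENNReal.one_rpow, lintegral_one, measure_univ,
    ENNReal.one_rpow, mul_one] at H
  calc (∫⁻ a, f a ∂P) ^ 2 ≤ ((∫⁻ a, f a ^ (2:ℝ) ∂P) ^ (1/2:ℝ)) ^ 2 :=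
        pow_le_pow_left' H 2
    _ = ∫⁻ a, f a ^ 2 ∂P := by
        rw [← ENNReal.rpow_natCast ((∫⁻ a, f a ^ (2:ℝ) ∂P) ^ (1/2:ℝ)) 2, ← ENNReal.rpow_mul]
        norm_num

lemma prod_fst_preimage_null (μ : Measure X) (ν : Measure Y) [IsProbabilityMeasure ν]
    {N : Set X} (hN : μ N = 0) : (μ.prod ν) (Prod.fst ⁻¹' N) = 0 := by
  refine le_antisymm ?_ zero_le
  calc (μ.prod ν) (Prod.fst ⁻¹' N)
      ≤ (μ.prod ν) ((toMeasurable μ N) ×ˢ (univ : Set Y)) :=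
        measure_mono fun p hp => ⟨subset_toMeasurable _ _ hp, trivial⟩
    _ = μ (toMeasurable μ N) * ν univ := Measure.prod_prod _ _
    _ = 0 := by rw [measure_toMeasurable, hN, zero_mul]

lemma prod_snd_preimage_null (μ : Measure X) (ν : Measure Y) [IsProbabilityMeasure μ]
    [IsProbabilityMeasure ν]
    {N : Set Y} (hN : ν N = 0) : (μ.prod ν) (Prod.snd ⁻¹' N) = 0 := by
  refine le_antisymm ?_ zero_le
  calc (μ.prod ν) (Prod.snd ⁻¹' N)
      ≤ (μ.prod ν) ((univ : Set X) ×ˢ (toMeasurable ν N)) :=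
        measure_mono fun p hp => ⟨trivial, subset_toMeasurable _ _ hp⟩
    _ = μ univ * ν (toMeasurable ν N) := Measure.prod_prod _ _
    _ = 0 := by rw [measure_toMeasurable, hN, mul_zero]

lemma nullMeasurable_comp_fst (μ : Measure X) (ν : Measure Y)
    [IsProbabilityMeasure μ] [IsProbabilityMeasure ν]
    {u : X → ℝ} (hu : UniversallyMeasurable u) :
    NullMeasurable (fun p : X × Y => u p.1) (μ.prod ν) := by
  intro s hs
  obtain ⟨t, hts, htm, hteq⟩ := (hu μ ‹_› s hs).exists_measurable_subset_ae_eq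
  rw [ae_eq_set] at hteq
  refine ⟨Prod.fst ⁻¹' t, htm.preimage measurable_fst, ?_⟩
  rw [show (fun p : X × Y => u p.1) ⁻¹' s = Prod.fst ⁻¹' (u ⁻¹' s) from rfl, ae_eq_set]
  constructor
  · rw [← Set.preimage_diff]; exact prod_fst_preimage_null μ ν hteq.2
  · rw [← Set.preimage_diff]; exact prod_fst_preimage_null μ ν hteq.1

lemma nullMeasurable_comp_snd (μ : Measure X) (ν : Measure Y)
    [IsProbabilityMeasure μ] [IsProbabilityMeasure ν]
    {v : Y → ℝ} (hv : UniversallyMeasurable v) :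
    NullMeasurable (fun p : X × Y => v p.2) (μ.prod ν) := by
  intro s hs
  obtain ⟨t, hts, htm, hteq⟩ := (hv ν ‹_› s hs).exists_measurable_subset_ae_eq
  rw [ae_eq_set] at hteq
  refine ⟨Prod.snd ⁻¹' t, htm.preimage measurable_snd, ?_⟩
  rw [show (fun p : X × Y => v p.2) ⁻¹' s = Prod.snd ⁻¹' (v ⁻¹' s) from rfl, ae_eq_set]
  constructor
  · rw [← Set.preimage_diff]; exact prod_snd_preimage_null μ ν hteq.2
  · rw [← Set.preimage_diff]; exact prod_snd_preimage_null μ ν hteq.1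

/-- Key step: if `A` has positive measure, there is `y₀` such that the set of points of `A`
whose first coordinate also pairs with `y₀` inside `A` has positive measure. -/
lemma exists_good_row (μ : Measure X) (ν : Measure Y)
    [IsProbabilityMeasure μ] [IsProbabilityMeasure ν]
    {A : Set (X × Y)} (hA : MeasurableSet A) (hpos : 0 < (μ.prod ν) A) :
    ∃ y₀ : Y, 0 < (μ.prod ν) (A ∩ {p : X × Y | (p.1, y₀) ∈ A}) := by
  by_contra hcon
  push_neg at hcon
  have hzero : ∀ y₀ : Y, (μ.prod ν) (A ∩ {p : X × Y | (p.1, y₀) ∈ A}) = 0 :=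
    fun y₀ => le_antisymm (hcon y₀) zero_le
  set F : X → ℝ≥0∞ := fun x => ν (Prod.mk x ⁻¹' A) with hF
  have hFm : Measurable F := measurable_measure_prodMk_left hA
  set g : X × Y → ℝ≥0∞ := fun q => A.indicator 1 q * F q.1 with hg
  have hgm : Measurable g := ((measurable_one.indicator hA)).mul (hFm.comp measurable_fst)
  have hmB : ∀ y₀ : Y, MeasurableSet {p : X × Y | (p.1, y₀) ∈ A} := fun y₀ =>
    hA.preimage (measurable_fst.prodMk measurable_const)
  have key : ∀ y₀ : Y, (μ.prod ν) (A ∩ {p : X × Y | (p.1, y₀) ∈ A})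
      = ∫⁻ x, g (x, y₀) ∂μ := by
    intro y₀
    rw [Measure.prod_apply (hA.inter (hmB y₀))]
    refine lintegral_congr fun x => ?_
    by_cases hx : (x, y₀) ∈ A
    · have : Prod.mk x ⁻¹' (A ∩ {p : X × Y | (p.1, y₀) ∈ A}) = Prod.mk x ⁻¹' A := by
        ext y; simp [hx]
      simp [this, hg, Set.indicator_of_mem hx, hF]
    · have : Prod.mk x ⁻¹' (A ∩ {p : X × Y | (p.1, y₀) ∈ A}) = ∅ := by
        ext y; simp [hx]
      simp [this, hg, Set.indicator_of_notMem hx]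
  have swap : ∫⁻ y₀, ∫⁻ x, g (x, y₀) ∂μ ∂ν = ∫⁻ x, ∫⁻ y₀, g (x, y₀) ∂ν ∂μ :=
    (lintegral_lintegral_swap hgm.aemeasurable).symm
  have inner : ∀ x : X, ∫⁻ y₀, g (x, y₀) ∂ν = F x ^ 2 := by
    intro x
    have : ∀ y₀ : Y, g (x, y₀) = (Prod.mk x ⁻¹' A).indicator (fun _ => F x) y₀ := by
      intro y₀
      by_cases hy : (x, y₀) ∈ A
      · simp [hg, Set.indicator_of_mem hy, Set.indicator_of_mem (show y₀ ∈ Prod.mk x ⁻¹' A from hy)]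
      · simp [hg, Set.indicator_of_notMem hy,
          Set.indicator_of_notMem (show y₀ ∉ Prod.mk x ⁻¹' A from hy)]
    rw [lintegral_congr this, lintegral_indicator (measurable_prodMk_left hA)]
    simp [hF, sq]
  have hAfin : (μ.prod ν) A ≠ ⊤ := (measure_lt_top _ _).ne
  have hAeq : (μ.prod ν) A = ∫⁻ x, F x ∂μ := Measure.prod_apply hA
  have hpos2 : 0 < ((μ.prod ν) A) ^ 2 := ENNReal.pow_pos hpos 2
  have : ((μ.prod ν) A) ^ 2 ≤ ∫⁻ y₀, ∫⁻ x, g (x, y₀) ∂μ ∂ν := by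
    rw [swap, lintegral_congr inner, hAeq]
    exact sq_lintegral_le_lintegral_sq μ hFm
  rw [lintegral_congr fun y₀ => (key y₀).symm, lintegral_congr hzero, lintegral_zero] at this
  exact absurd (le_antisymm this zero_le) hpos2.ne'

lemma exists_good_col (μ : Measure X) (ν : Measure Y)
    [IsProbabilityMeasure μ] [IsProbabilityMeasure ν]
    {A : Set (X × Y)} (hA : MeasurableSet A) (hpos : 0 < (μ.prod ν) A) :
    ∃ x₀ : X, 0 < (μ.prod ν) (A ∩ {p : X × Y | (x₀, p.2) ∈ A}) := by
  have hA' : MeasurableSet (Prod.swap ⁻¹' A : Set (Y × X)) := hA.preimage measurable_swap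
  have hswap : ∀ S : Set (X × Y), MeasurableSet S →
      (ν.prod μ) (Prod.swap ⁻¹' S) = (μ.prod ν) S := by
    intro S hS
    rw [← Measure.prod_swap, Measure.map_apply measurable_swap (hS.preimage measurable_swap),
      Set.preimage_preimage]
    simp
  have hpos' : 0 < (ν.prod μ) (Prod.swap ⁻¹' A) := by rwa [hswap A hA]
  obtain ⟨x₀, hx₀⟩ := exists_good_row ν μ hA' hpos'
  refine ⟨x₀, ?_⟩
  have hset : (Prod.swap ⁻¹' A ∩ {q : Y × X | (q.1, x₀) ∈ Prod.swap ⁻¹' A})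
      = Prod.swap ⁻¹' (A ∩ {p : X × Y | (x₀, p.2) ∈ A}) := by
    ext ⟨y, x⟩; exact Iff.rfl
  have hm2 : MeasurableSet (A ∩ {p : X × Y | (x₀, p.2) ∈ A}) :=
    hA.inter (hA.preimage (measurable_const.prodMk measurable_snd))
  rw [hset, hswap (A ∩ {p : X × Y | (x₀, p.2) ∈ A}) hm2] at hx₀
  exact hx₀

end Aux

/-- For a product measure `η = η₁ ⊗ η₂`, a Borel function `h` coincides with a sum
`u(x) + v(y)` (with `u, v` universally measurable) on a set of positive measure iff
there is a Borel set of positive measure on which all quadruple sums of `h` coincide. -/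
theorem degenerate_iff_quadruples
    {X Y : Type*} [TopologicalSpace X] [TopologicalSpace Y]
    [MeasurableSpace X] [BorelSpace X] [MeasurableSpace Y] [BorelSpace Y]
    (hX : IsSouslinSpace X) (hY : IsSouslinSpace Y)
    (η₁ : Measure X) (η₂ : Measure Y) [IsProbabilityMeasure η₁] [IsProbabilityMeasure η₂]
    (h : X × Y → ℝ) (hmeas : Measurable h) :
    (∃ (u : X → ℝ) (v : Y → ℝ), UniversallyMeasurable u ∧ UniversallyMeasurable v ∧
      0 < (η₁.prod η₂) {p : X × Y | h p = u p.1 + v p.2}) ↔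
    (∃ A : Set (X × Y), MeasurableSet A ∧ 0 < (η₁.prod η₂) A ∧
      ∀ x₁ x₂ : X, ∀ y₁ y₂ : Y,
        (x₁, y₁) ∈ A → (x₁, y₂) ∈ A → (x₂, y₁) ∈ A → (x₂, y₂) ∈ A →
        h (x₁, y₁) + h (x₂, y₂) = h (x₁, y₂) + h (x₂, y₁)) := by
  constructor
  · rintro ⟨u, v, hu, hv, hSpos⟩
    set S : Set (X × Y) := {p : X × Y | h p = u p.1 + v p.2} with hSdef
    -- S is null measurable
    have hfu : AEMeasurable (fun p : X × Y => u p.1) (η₁.prod η₂) :=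
      (nullMeasurable_comp_fst η₁ η₂ hu).aemeasurable
    have hfv : AEMeasurable (fun p : X × Y => v p.2) (η₁.prod η₂) :=
      (nullMeasurable_comp_snd η₁ η₂ hv).aemeasurable
    have hf : AEMeasurable (fun p : X × Y => h p - (u p.1 + v p.2)) (η₁.prod η₂) :=
      hmeas.aemeasurable.sub (hfu.add hfv)
    have hSnull : NullMeasurableSet S (η₁.prod η₂) := by
      have : S = (fun p : X × Y => h p - (u p.1 + v p.2)) ⁻¹' {0} := by
        ext p; simp [hSdef, sub_eq_zero]
      rw [this]
      exact hf.nullMeasurable (measurableSet_singleton 0)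
    obtain ⟨A, hAS, hAm, hAeq⟩ := hSnull.exists_measurable_subset_ae_eq
    refine ⟨A, hAm, ?_, ?_⟩
    · rwa [measure_congr hAeq]
    · intro x₁ x₂ y₁ y₂ h11 h12 h21 h22
      have e11 := hAS h11
      have e12 := hAS h12
      have e21 := hAS h21
      have e22 := hAS h22
      simp only [hSdef, Set.mem_setOf_eq] at e11 e12 e21 e22
      linarith
  · rintro ⟨A, hAm, hApos, hquad⟩
    obtain ⟨y₀, hy₀⟩ := exists_good_row η₁ η₂ hAm hApos
    set A₁ : Set (X × Y) := A ∩ {p : X × Y | (p.1, y₀) ∈ A} with hA₁def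
    have hA₁m : MeasurableSet A₁ :=
      hAm.inter (hAm.preimage (measurable_fst.prodMk measurable_const))
    obtain ⟨x₀, hx₀⟩ := exists_good_col η₁ η₂ hA₁m hy₀
    set A₂ : Set (X × Y) := A₁ ∩ {p : X × Y | (x₀, p.2) ∈ A₁} with hA₂def
    refine ⟨fun x => h (x, y₀), fun y => h (x₀, y) - h (x₀, y₀), ?_, ?_, ?_⟩
    · have : Measurable fun x => h (x, y₀) :=
        hmeas.comp (measurable_id.prodMk measurable_const)
      exact fun μ' _ s hs => ((this hs).nullMeasurableSet)
    · have : Measurable fun y => h (x₀, y) - h (x₀, y₀) :=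
        (hmeas.comp (measurable_const.prodMk measurable_id)).sub measurable_const
      exact fun μ' _ s hs => ((this hs).nullMeasurableSet)
    · refine lt_of_lt_of_le hx₀ (measure_mono ?_)
      rintro ⟨x, y⟩ hp
      obtain ⟨⟨hxyA, hxy₀A⟩, hx₀yA₁⟩ := hp
      obtain ⟨hx₀yA, hx₀y₀A⟩ := hx₀yA₁
      have := hquad x x₀ y y₀ hxyA hxy₀A hx₀yA hx₀y₀A
      simp only [Set.mem_setOf_eq]
      linarith
end

section
/- Let h : ℝ² → ℝ be a Borel measurable function such that for λ₂-almost every (x₀, y₀) ∈ ℝ² there exists a neighbourhood U of (x₀, y₀) on which the mixed second partial derivative ∂²h/∂x∂y(x,y) exists and is nonzero for all (x,y) ∈ U. Then for every set A ⊆ ℝ² with Lebesgue measure λ₂(A) > 0 there exist points x₁, x₂, y₁, y₂ ∈ ℝ with (x₁,y₁), (x₁,y₂), (x₂,y₁), (x₂,y₂) ∈ A and h(x₁,y₁) + h(x₂,y₂) < h(x₁,y₂) + h(x₂,y₁). -/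
open MeasureTheory Set Metric Filter

lemma exists_corners (S : Set (ℝ × ℝ)) (hS : MeasurableSet S) (h0 : 0 < volume S) :
    ∃ x₁ x₂ y₁ y₂ : ℝ, x₁ ≠ x₂ ∧ y₁ ≠ y₂ ∧ (x₁,y₁) ∈ S ∧ (x₁,y₂) ∈ S ∧
      (x₂,y₁) ∈ S ∧ (x₂,y₂) ∈ S := by
  classical
  set u : ℝ × ℝ → ENNReal := S.indicator 1 with hu
  have humeas : Measurable u := measurable_one.indicator hS
  set g : ℝ → ENNReal := fun x => ∫⁻ y, u (x, y) with hg
  have hgmeas : Measurable g := humeas.lintegral_prod_right'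
  have hgint : ∫⁻ x, g x = volume S := by
    have h1 : volume S = ∫⁻ z, u z ∂(volume : Measure (ℝ × ℝ)) :=
      (lintegral_indicator_one hS).symm
    rw [h1, Measure.volume_eq_prod, lintegral_prod u
      (by rw [← Measure.volume_eq_prod]; exact humeas.aemeasurable)]
  set f : ℝ × ℝ → ENNReal := fun q => ∫⁻ x, u (x, q.1) * u (x, q.2) with hf
  have key : ∫⁻ q, f q = ∫⁻ x, g x * g x := by
    have hmeasF : Measurable (Function.uncurry fun (q : ℝ × ℝ) (x : ℝ) =>
        u (x, q.1) * u (x, q.2)) := by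
      apply Measurable.mul
      · exact humeas.comp (measurable_snd.prodMk (measurable_fst.comp measurable_fst))
      · exact humeas.comp (measurable_snd.prodMk (measurable_snd.comp measurable_fst))
    have swap := lintegral_lintegral_swap (μ := (volume : Measure (ℝ × ℝ))) (ν := (volume : Measure ℝ)) hmeasF.aemeasurable
    rw [hf]
    rw [swap]
    congr 1
    ext x
    have hm : AEMeasurable (fun y : ℝ => u (x, y)) volume :=
      (humeas.comp (measurable_const.prodMk measurable_id)).aemeasurable
    rw [Measure.volume_eq_prod]
    exact lintegral_prod_mul hm hm
  have hpos : 0 < ∫⁻ q, f q := by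
    rw [key]
    by_contra hc
    push_neg at hc
    have hzero : ∫⁻ x, g x * g x = 0 := le_antisymm hc zero_le
    have := (lintegral_eq_zero_iff (hgmeas.mul hgmeas)).1 hzero
    have hg0 : g =ᵐ[volume] 0 := by
      filter_upwards [this] with x hx
      simpa [mul_self_eq_zero] using hx
    have : ∫⁻ x, g x = 0 := by rw [lintegral_congr_ae hg0]; simp
    rw [this] at hgint
    exact absurd hgint.symm (ne_of_gt h0)
  have hT : volume {q : ℝ × ℝ | f q ≠ 0} ≠ 0 := by
    intro hc
    have : f =ᵐ[volume] 0 := by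
      rw [Filter.EventuallyEq, ae_iff]
      simpa using hc
    have h0' : ∫⁻ q, f q = 0 := by rw [lintegral_congr_ae this]; simp
    rw [h0'] at hpos
    exact lt_irrefl _ hpos
  have hD : volume {q : ℝ × ℝ | q.1 = q.2} = 0 := by
    have hDm : MeasurableSet {q : ℝ × ℝ | q.1 = q.2} :=
      measurableSet_eq_fun measurable_fst measurable_snd
    rw [Measure.volume_eq_prod, Measure.prod_apply hDm]
    have : ∀ x : ℝ, (Prod.mk x ⁻¹' {q : ℝ × ℝ | q.1 = q.2}) = {x} := by
      intro x; ext y; simp [eq_comm]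
    simp [this]
  have hne : ({q : ℝ × ℝ | f q ≠ 0} \ {q : ℝ × ℝ | q.1 = q.2}).Nonempty := by
    rw [Set.nonempty_iff_ne_empty]
    intro hc
    have hsub : {q : ℝ × ℝ | f q ≠ 0} ⊆ {q : ℝ × ℝ | q.1 = q.2} :=
      Set.diff_eq_empty.1 hc
    exact hT (measure_mono_null hsub hD)
  obtain ⟨⟨y₁, y₂⟩, hq⟩ := hne
  have hfq : f (y₁, y₂) ≠ 0 := hq.1
  have hyy : y₁ ≠ y₂ := hq.2
  set W : Set ℝ := {x | (x, y₁) ∈ S ∧ (x, y₂) ∈ S} with hW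
  have hWm : MeasurableSet W := by
    have h1 : MeasurableSet ((fun x : ℝ => (x, y₁)) ⁻¹' S) :=
      hS.preimage (measurable_id.prodMk measurable_const)
    have h2 : MeasurableSet ((fun x : ℝ => (x, y₂)) ⁻¹' S) :=
      hS.preimage (measurable_id.prodMk measurable_const)
    exact h1.inter h2
  have hfW : f (y₁, y₂) = volume W := by
    rw [hf]
    have : ∀ x : ℝ, u (x, y₁) * u (x, y₂) = W.indicator 1 x := by
      intro x
      by_cases h1 : (x, y₁) ∈ S <;> by_cases h2 : (x, y₂) ∈ S <;>
        simp [hu, hW, Set.indicator_apply, h1, h2]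
    simp only [this]
    exact lintegral_indicator_one hWm
  have hWpos : volume W ≠ 0 := by rw [← hfW]; exact hfq
  have hWnt : W.Nontrivial := by
    by_contra hc
    rw [Set.not_nontrivial_iff] at hc
    exact hWpos (Set.Subsingleton.measure_zero hc _)
  obtain ⟨x₁, hx₁, x₂, hx₂, hxx⟩ := hWnt
  exact ⟨x₁, x₂, y₁, y₂, hxx, hyy, hx₁.1, hx₁.2, hx₂.1, hx₂.2⟩

lemma rect_ne (h h₁ h₂ : ℝ × ℝ → ℝ) (U : Set (ℝ × ℝ))
    (H1 : ∀ p ∈ U, HasDerivAt (fun t => h (t, p.2)) (h₁ p) p.1)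
    (H2 : ∀ p ∈ U, HasDerivAt (fun t => h₁ (p.1, t)) (h₂ p) p.2)
    (H3 : ∀ p ∈ U, h₂ p ≠ 0)
    {a b c d : ℝ} (hab : a < b) (hcd : c < d)
    (hsub : Set.Icc a b ×ˢ Set.Icc c d ⊆ U) :
    h (a, c) + h (b, d) ≠ h (a, d) + h (b, c) := by
  have hmem : ∀ x ∈ Set.Icc a b, ∀ y ∈ Set.Icc c d, ((x, y) : ℝ × ℝ) ∈ U := by
    intro x hx y hy; exact hsub ⟨hx, hy⟩
  -- inner claim
  have inner : ∀ x ∈ Set.Icc a b, h₁ (x, d) - h₁ (x, c) ≠ 0 := by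
    intro x hx
    have hder : ∀ t ∈ Set.Icc c d, HasDerivAt (fun t => h₁ (x, t)) (h₂ (x, t)) t := by
      intro t ht
      exact H2 (x, t) (hmem x hx t ht)
    have hcont : ContinuousOn (fun t => h₁ (x, t)) (Set.Icc c d) :=
      fun t ht => (hder t ht).continuousAt.continuousWithinAt
    obtain ⟨ξ, hξ, hslope⟩ := exists_hasDerivAt_eq_slope (fun t => h₁ (x, t))
      (fun t => h₂ (x, t)) hcd hcont
      (fun t ht => hder t (Set.mem_Icc_of_Ioo ht))
    have hξU : ((x, ξ) : ℝ × ℝ) ∈ U := hmem x hx ξ (Set.mem_Icc_of_Ioo hξ)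
    have := H3 (x, ξ) hξU
    intro hc
    apply this
    rw [hslope, hc, zero_div]
  -- outer MVT
  have hderψ : ∀ x ∈ Set.Icc a b,
      HasDerivAt (fun x => h (x, d) - h (x, c)) (h₁ (x, d) - h₁ (x, c)) x := by
    intro x hx
    have h1 := H1 (x, d) (hmem x hx d ⟨le_of_lt hcd, le_refl d⟩)
    have h2 := H1 (x, c) (hmem x hx c ⟨le_refl c, le_of_lt hcd⟩)
    exact h1.sub h2
  have hcontψ : ContinuousOn (fun x => h (x, d) - h (x, c)) (Set.Icc a b) :=
    fun x hx => (hderψ x hx).continuousAt.continuousWithinAt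
  obtain ⟨η, hη, hslope⟩ := exists_hasDerivAt_eq_slope (fun x => h (x, d) - h (x, c))
    (fun x => h₁ (x, d) - h₁ (x, c)) hab hcontψ
    (fun x hx => hderψ x (Set.mem_Icc_of_Ioo hx))
  have hne := inner η (Set.mem_Icc_of_Ioo hη)
  rw [hslope] at hne
  intro hc
  apply hne
  have : ((h (b, d) - h (b, c)) - (h (a, d) - h (a, c))) = 0 := by linarith
  rw [show (fun x => h (x, d) - h (x, c)) b - (fun x => h (x, d) - h (x, c)) a
      = ((h (b, d) - h (b, c)) - (h (a, d) - h (a, c))) by ring_nf, this, zero_div]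

/-- If for a.e. point of `ℝ²` the mixed second partial derivative `∂²h/∂x∂y` exists and is
nonzero on a neighbourhood, then on every set of positive Lebesgue measure one can find a
quadruple on which `h` is "strictly cyclically monotone-violating". -/
theorem nondegenerate_of_mixed_partial_nonzero
    (h : ℝ × ℝ → ℝ) (hmeas : Measurable h)
    (hd : ∀ᵐ p₀ : ℝ × ℝ ∂volume, ∃ U ∈ nhds p₀, ∃ h₁ h₂ : ℝ × ℝ → ℝ,
      (∀ p ∈ U, HasDerivAt (fun t => h (t, p.2)) (h₁ p) p.1) ∧
      (∀ p ∈ U, HasDerivAt (fun t => h₁ (p.1, t)) (h₂ p) p.2) ∧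
      (∀ p ∈ U, h₂ p ≠ 0)) :
    ∀ A : Set (ℝ × ℝ), MeasurableSet A → 0 < volume A →
      ∃ x₁ x₂ y₁ y₂ : ℝ, (x₁, y₁) ∈ A ∧ (x₁, y₂) ∈ A ∧ (x₂, y₁) ∈ A ∧ (x₂, y₂) ∈ A ∧
        h (x₁, y₁) + h (x₂, y₂) < h (x₁, y₂) + h (x₂, y₁) := by
  intro A hA hApos
  haveI : (ae (volume.restrict A)).NeBot := by
    rw [ae_neBot]
    intro hc
    rw [Measure.restrict_eq_zero] at hc
    exact absurd hc hApos.ne'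
  have d1 := Besicovitch.ae_tendsto_measure_inter_div (volume : Measure (ℝ × ℝ)) A
  have d2 : ∀ᵐ p ∂(volume.restrict A), ∃ U ∈ nhds p, ∃ h₁ h₂ : ℝ × ℝ → ℝ,
      (∀ q ∈ U, HasDerivAt (fun t => h (t, q.2)) (h₁ q) q.1) ∧
      (∀ q ∈ U, HasDerivAt (fun t => h₁ (q.1, t)) (h₂ q) q.2) ∧
      (∀ q ∈ U, h₂ q ≠ 0) := ae_mono Measure.restrict_le_self hd
  have d3 : ∀ᵐ x ∂((volume : Measure (ℝ × ℝ)).restrict A), x ∈ A := ae_restrict_mem hA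
  obtain ⟨p, hpd, ⟨U, hU, h₁, h₂, H1, H2, H3⟩, hpA⟩ := (d1.and (d2.and d3)).exists
  obtain ⟨ε, hε, hball⟩ := Metric.mem_nhds_iff.1 hU
  have hhalf : ∀ᶠ r in nhdsWithin (0:ℝ) (Set.Ioi 0),
      (1:ENNReal)/2 < volume (A ∩ closedBall p r) / volume (closedBall p r) :=
    hpd.eventually (eventually_gt_nhds (by norm_num))
  have hsmall : ∀ᶠ r in nhdsWithin (0:ℝ) (Set.Ioi 0), r ∈ Set.Ioo 0 ε :=
    eventually_of_mem (Ioo_mem_nhdsGT_of_mem ⟨le_refl 0, hε⟩) (fun r hr => hr)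
  obtain ⟨r, hrhalf, hr0, hrε⟩ := (hhalf.and hsmall).exists
  have hS0 : volume (A ∩ closedBall p r) ≠ 0 := by
    intro hc
    rw [hc, ENNReal.zero_div] at hrhalf
    simp at hrhalf
  set S : Set (ℝ × ℝ) := A ∩ closedBall p r with hSdef
  have hSm : MeasurableSet S := hA.inter measurableSet_closedBall
  have hSpos : 0 < volume S := zero_lt_iff.mpr hS0
  obtain ⟨x₁, x₂, y₁, y₂, hxx, hyy, h11, h12, h21, h22⟩ := exists_corners S hSm hSpos
  have hSA : S ⊆ A := Set.inter_subset_left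
  have hScb : S ⊆ closedBall p r := Set.inter_subset_right
  have hcbU : closedBall p r ⊆ U := Set.Subset.trans (closedBall_subset_ball hrε) hball
  have hcomp : ∀ q : ℝ × ℝ, q ∈ closedBall p r → q.1 ∈ closedBall p.1 r ∧ q.2 ∈ closedBall p.2 r := by
    intro q hq
    rw [← Prod.mk.eta (p := q), ← closedBall_prod_same] at hq
    exact ⟨hq.1, hq.2⟩
  have hx1 := (hcomp _ (hScb h11)).1
  have hy1 := (hcomp _ (hScb h11)).2
  have hx2 := (hcomp _ (hScb h22)).1
  have hy2 := (hcomp _ (hScb h22)).2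
  set a := min x₁ x₂ with hadef
  set b := max x₁ x₂ with hbdef
  set c := min y₁ y₂ with hcdef
  set d := max y₁ y₂ with hddef
  have hab : a < b := min_lt_max.mpr hxx
  have hcd : c < d := min_lt_max.mpr hyy
  have hrect : Set.Icc a b ×ˢ Set.Icc c d ⊆ U := by
    rintro ⟨x, y⟩ ⟨hx, hy⟩
    apply hcbU
    rw [← closedBall_prod_same]
    have hxm : x ∈ closedBall p.1 r := by
      rw [Real.closedBall_eq_Icc] at hx1 hx2 ⊢
      exact ⟨le_trans (le_min hx1.1 hx2.1) hx.1, le_trans hx.2 (max_le hx1.2 hx2.2)⟩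
    have hym : y ∈ closedBall p.2 r := by
      rw [Real.closedBall_eq_Icc] at hy1 hy2 ⊢
      exact ⟨le_trans (le_min hy1.1 hy2.1) hy.1, le_trans hy.2 (max_le hy1.2 hy2.2)⟩
    exact Set.mem_prod.mpr ⟨hxm, hym⟩
  have hall : ∀ s, (s = x₁ ∨ s = x₂) → ∀ t, (t = y₁ ∨ t = y₂) → (s, t) ∈ S := by
    rintro s (rfl | rfl) t (rfl | rfl) <;> assumption
  have ha' : a = x₁ ∨ a = x₂ := min_choice x₁ x₂
  have hb' : b = x₁ ∨ b = x₂ := max_choice x₁ x₂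
  have hc' : c = y₁ ∨ c = y₂ := min_choice y₁ y₂
  have hd' : d = y₁ ∨ d = y₂ := max_choice y₁ y₂
  have hac : (a, c) ∈ S := hall a ha' c hc'
  have had : (a, d) ∈ S := hall a ha' d hd'
  have hbc : (b, c) ∈ S := hall b hb' c hc'
  have hbd : (b, d) ∈ S := hall b hb' d hd'
  have hne := rect_ne h h₁ h₂ U H1 H2 H3 hab hcd hrect
  rcases lt_or_gt_of_ne hne with hlt | hgt
  · exact ⟨a, b, c, d, hSA hac, hSA had, hSA hbc, hSA hbd, hlt⟩
  · exact ⟨b, a, c, d, hSA hbc, hSA hbd, hSA hac, hSA had, by linarith⟩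
end

section
/- Let h : ℝ² → ℝ be a Borel measurable function such that the Sobolev (distributional) mixed derivative ∂²h/∂x∂y exists as a function in L¹_loc(ℝ²) and ∂²h/∂x∂y ≠ 0 λ₂-almost everywhere. Then for every set A ⊆ ℝ² with Lebesgue measure λ₂(A) > 0 there exist points x₁, x₂, y₁, y₂ ∈ ℝ with (x₁,y₁), (x₁,y₂), (x₂,y₁), (x₂,y₂) ∈ A and h(x₁,y₁) + h(x₂,y₂) < h(x₁,y₂) + h(x₂,y₁). -/
open MeasureTheory Set Metric Filter

private lemma mp_cross : MeasurePreserving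
    (fun q : (ℝ×ℝ)×(ℝ×ℝ) => ((q.1.1, q.2.2), (q.2.1, q.1.2))) volume volume := by
  have h1 := measurePreserving_prodAssoc (volume : Measure ℝ) (volume : Measure ℝ)
    ((volume : Measure ℝ).prod (volume : Measure ℝ))
  have ga := (measurePreserving_prodAssoc (volume : Measure ℝ) volume volume).symm
    (MeasurableEquiv.prodAssoc : (ℝ×ℝ)×ℝ ≃ᵐ ℝ×(ℝ×ℝ))
  have gb : MeasurePreserving (Prod.swap : (ℝ×ℝ)×ℝ → ℝ×((ℝ×ℝ)))
      (((volume : Measure ℝ).prod volume).prod volume)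
      ((volume : Measure ℝ).prod ((volume : Measure ℝ).prod volume)) :=
    Measure.measurePreserving_swap
  have gc : MeasurePreserving (Prod.map (id : ℝ → ℝ) (Prod.swap : ℝ×ℝ → ℝ×ℝ))
      ((volume : Measure ℝ).prod ((volume : Measure ℝ).prod volume))
      ((volume : Measure ℝ).prod ((volume : Measure ℝ).prod volume)) :=
    (MeasurePreserving.id volume).prod Measure.measurePreserving_swap
  have g0 := gc.comp (gb.comp ga)
  have h2 := (MeasurePreserving.id (volume : Measure ℝ)).prod g0
  have h3 := (measurePreserving_prodAssoc (volume : Measure ℝ) volume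
      ((volume : Measure ℝ).prod volume)).symm
      (MeasurableEquiv.prodAssoc : (ℝ×ℝ)×(ℝ×ℝ) ≃ᵐ ℝ×(ℝ×(ℝ×ℝ)))
  have hfin := h3.comp (h2.comp h1)
  convert hfin using 1
  all_goals rfl

private lemma mp_shear : MeasurePreserving
    (fun q : (ℝ×ℝ)×(ℝ×ℝ) => (q.1, q.2 - q.1)) volume volume :=
  measurePreserving_prod_sub (volume : Measure (ℝ×ℝ)) volume

set_option maxHeartbeats 2000000 in
/-- If the Sobolev mixed derivative `∂²h/∂x∂y` exists as a locally integrable function `g`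
(in the sense that the rectangle increments of `h` are given by integrals of `g` for a.e.
rectangle with positive side lengths) and `g ≠ 0` a.e., then on every set of positive
Lebesgue measure one can find a quadruple on which `h` strictly violates the degeneracy
identity. -/
theorem nondegenerate_of_sobolev_mixed_derivative_nonzero
    (h : ℝ × ℝ → ℝ) (hmeas : Measurable h)
    (g : ℝ × ℝ → ℝ) (hgloc : LocallyIntegrable g volume)
    (hrect : ∀ᵐ q : (ℝ × ℝ) × ℝ × ℝ ∂volume, 0 < q.2.1 → 0 < q.2.2 →
      h (q.1.1 + q.2.1, q.1.2 + q.2.2) - h (q.1.1, q.1.2 + q.2.2)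
        - h (q.1.1 + q.2.1, q.1.2) + h q.1
      = ∫ p in Icc q.1.1 (q.1.1 + q.2.1) ×ˢ Icc q.1.2 (q.1.2 + q.2.2), g p)
    (hg0 : ∀ᵐ p : ℝ × ℝ ∂volume, g p ≠ 0) :
    ∀ A : Set (ℝ × ℝ), MeasurableSet A → 0 < volume A →
      ∃ x₁ x₂ y₁ y₂ : ℝ, (x₁, y₁) ∈ A ∧ (x₁, y₂) ∈ A ∧ (x₂, y₁) ∈ A ∧ (x₂, y₂) ∈ A ∧
        h (x₁, y₁) + h (x₂, y₂) < h (x₁, y₂) + h (x₂, y₁) := by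
  intro A hAm hApos
  by_contra hcon
  push_neg at hcon
  -- Step 1: the rectangle increment of h vanishes on grids in A
  have heq : ∀ x₁ x₂ y₁ y₂ : ℝ, (x₁,y₁) ∈ A → (x₁,y₂) ∈ A → (x₂,y₁) ∈ A → (x₂,y₂) ∈ A →
      h (x₂,y₂) - h (x₁,y₂) - h (x₂,y₁) + h (x₁,y₁) = 0 := by
    intro x₁ x₂ y₁ y₂ m11 m12 m21 m22
    have h1 := hcon x₁ x₂ y₁ y₂ m11 m12 m21 m22
    have h2 := hcon x₂ x₁ y₁ y₂ m21 m22 m11 m12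
    linarith
  -- Step 2: transfer hrect to quadruples of corners
  have hrect' : ∀ᵐ q : (ℝ×ℝ)×(ℝ×ℝ) ∂volume, q.1.1 < q.2.1 → q.1.2 < q.2.2 →
      h (q.2.1, q.2.2) - h (q.1.1, q.2.2) - h (q.2.1, q.1.2) + h (q.1.1, q.1.2)
        = ∫ p in Icc q.1.1 q.2.1 ×ˢ Icc q.1.2 q.2.2, g p := by
    filter_upwards [mp_shear.quasiMeasurePreserving.tendsto_ae.eventually hrect] with q hq h1 h2
    have e1 : (0:ℝ) < ((fun q : (ℝ×ℝ)×(ℝ×ℝ) => (q.1, q.2 - q.1)) q).2.1 := by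
      simpa using sub_pos.mpr h1
    have e2 : (0:ℝ) < ((fun q : (ℝ×ℝ)×(ℝ×ℝ) => (q.1, q.2 - q.1)) q).2.2 := by
      simpa using sub_pos.mpr h2
    have := hq e1 e2
    simpa [Prod.fst_sub, Prod.snd_sub, add_sub_cancel] using this
  -- Step 3: choose a good point p
  have hleb : ∀ᵐ p : ℝ×ℝ ∂volume, Tendsto (fun r => ⨍ y in closedBall p r, ‖g y - g p‖)
      (nhdsWithin 0 (Set.Ioi 0)) (nhds 0) := by
    filter_upwards [(Besicovitch.vitaliFamily
      (volume : Measure (ℝ×ℝ))).ae_tendsto_average_norm_sub hgloc] with x hx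
    exact hx.comp (Besicovitch.tendsto_filterAt volume x)
  have hdens := Besicovitch.ae_tendsto_measure_inter_div (volume : Measure (ℝ×ℝ)) A
  have hne : volume.restrict A ≠ 0 := by
    rw [Ne, Measure.restrict_eq_zero]
    exact hApos.ne'
  haveI := ae_neBot.mpr hne
  obtain ⟨p, hpd, hpl, hpg⟩ :=
    (hdens.and ((ae_restrict_of_ae hleb).and (ae_restrict_of_ae hg0))).exists
  have hgp : 0 < |g p| := abs_pos.mpr hpg
  -- Step 4: choose a radius r
  have hc1 : (ENNReal.ofReal (63/64) : ENNReal) < 1 := by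
    rw [ENNReal.ofReal_lt_one]; norm_num
  have ev1 := hpd.eventually (lt_mem_nhds hc1)
  have ev2 := hpl.eventually (gt_mem_nhds (show (0:ℝ) < |g p|/32 by positivity))
  have ev3 : ∀ᶠ r in nhdsWithin (0:ℝ) (Set.Ioi 0), 0 < r := eventually_mem_nhdsWithin
  obtain ⟨r, ⟨hrdens, hrleb⟩, hr0⟩ := ((ev1.and ev2).and ev3).exists
  have hball : closedBall p r = Icc (p.1 - r) (p.1 + r) ×ˢ Icc (p.2 - r) (p.2 + r) := by
    rw [← closedBall_prod_same, Real.closedBall_eq_Icc, Real.closedBall_eq_Icc]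
  -- Step 5: the complement of A is small in the ball
  have hBA : volume (closedBall p r \ A) ≤ ENNReal.ofReal (r^2/16) := by
    have hvolB : volume (closedBall p r) = ENNReal.ofReal (4*r^2) := by
      rw [hball, Measure.volume_eq_prod, Measure.prod_prod, Real.volume_Icc, Real.volume_Icc,
        show p.1 + r - (p.1 - r) = 2*r by ring, show p.2 + r - (p.2 - r) = 2*r by ring,
        ← ENNReal.ofReal_mul (by linarith)]
      congr 1; ring
    have hmul : ENNReal.ofReal (63/64 * (4*r^2)) ≤ volume (A ∩ closedBall p r) := by
      have := (ENNReal.mul_lt_of_lt_div hrdens).le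
      rwa [hvolB, ← ENNReal.ofReal_mul (by norm_num)] at this
    have hsplit := measure_inter_add_diff (μ := (volume : Measure (ℝ×ℝ)))
      (closedBall p r) hAm
    have key : volume (closedBall p r \ A) + ENNReal.ofReal (63/64 * (4*r^2))
        ≤ ENNReal.ofReal (r^2/16) + ENNReal.ofReal (63/64 * (4*r^2)) := by
      calc volume (closedBall p r \ A) + ENNReal.ofReal (63/64 * (4*r^2))
          ≤ volume (closedBall p r \ A) + volume (A ∩ closedBall p r) := by gcongr
        _ = volume (closedBall p r) := by rw [inter_comm] at hsplit; rw [add_comm]; exact hsplit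
        _ = ENNReal.ofReal (r^2/16) + ENNReal.ofReal (63/64 * (4*r^2)) := by
            rw [hvolB, ← ENNReal.ofReal_add (by positivity) (by positivity)]
            congr 1; ring
    exact (ENNReal.add_le_add_iff_right ENNReal.ofReal_ne_top).mp key
  -- Step 6: the set of good quadruples has positive measure
  set I₁ := Icc (p.1-r) (p.1-r/4) with hI₁
  set J₁ := Icc (p.2-r) (p.2-r/4) with hJ₁
  set I₂ := Icc (p.1+r/4) (p.1+r) with hI₂
  set J₂ := Icc (p.2+r/4) (p.2+r) with hJ₂
  have hsubB : ∀ I J : Set ℝ, I ⊆ Icc (p.1-r) (p.1+r) → J ⊆ Icc (p.2-r) (p.2+r) →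
      I ×ˢ J ⊆ closedBall p r := by
    intro I J hI hJ; rw [hball]; exact prod_mono hI hJ
  have hI₁s : I₁ ⊆ Icc (p.1-r) (p.1+r) := Icc_subset_Icc le_rfl (by linarith)
  have hI₂s : I₂ ⊆ Icc (p.1-r) (p.1+r) := Icc_subset_Icc (by linarith) le_rfl
  have hJ₁s : J₁ ⊆ Icc (p.2-r) (p.2+r) := Icc_subset_Icc le_rfl (by linarith)
  have hJ₂s : J₂ ⊆ Icc (p.2-r) (p.2+r) := Icc_subset_Icc (by linarith) le_rfl
  have hbad : ∀ S : Set (ℝ×ℝ), S ⊆ closedBall p r →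
      volume (S ∩ Aᶜ) ≤ ENNReal.ofReal (r^2/16) := by
    intro S hS
    refine le_trans (measure_mono ?_) hBA
    exact fun z hz => ⟨hS hz.1, hz.2⟩
  have hvIJ : ∀ c : ℝ, volume (Icc (c+r/4) (c+r)) = ENNReal.ofReal (3/4*r) := by
    intro c; rw [Real.volume_Icc]; congr 1; ring
  have hvIJ' : ∀ c : ℝ, volume (Icc (c-r) (c-r/4)) = ENNReal.ofReal (3/4*r) := by
    intro c; rw [Real.volume_Icc]; congr 1; ring
  have hv2 : ∀ (I J : Set ℝ), volume I = ENNReal.ofReal (3/4*r) →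
      volume J = ENNReal.ofReal (3/4*r) →
      volume (I ×ˢ J) = ENNReal.ofReal (9/16*r^2) := by
    intro I J hI hJ
    rw [Measure.volume_eq_prod, Measure.prod_prod, hI, hJ,
      ← ENNReal.ofReal_mul (by linarith)]
    congr 1; ring
  have hv11 : volume (I₁ ×ˢ J₁) = ENNReal.ofReal (9/16*r^2) := hv2 _ _ (hvIJ' _) (hvIJ' _)
  have hv22 : volume (I₂ ×ˢ J₂) = ENNReal.ofReal (9/16*r^2) := hv2 _ _ (hvIJ _) (hvIJ _)
  have hv12 : volume (I₂ ×ˢ J₁) = ENNReal.ofReal (9/16*r^2) := hv2 _ _ (hvIJ _) (hvIJ' _)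
  set m := fun q : (ℝ×ℝ)×(ℝ×ℝ) => ((q.1.1, q.2.2), (q.2.1, q.1.2)) with hm
  set G := ((I₁ ×ˢ J₁) ×ˢ (I₂ ×ˢ J₂)) ∩
      {q : (ℝ×ℝ)×(ℝ×ℝ) | q.1 ∈ A ∧ (q.1.1, q.2.2) ∈ A ∧ (q.2.1, q.1.2) ∈ A ∧ q.2 ∈ A} with hG
  set b11 := ((I₁ ×ˢ J₁) ∩ Aᶜ) ×ˢ (I₂ ×ˢ J₂) with hb11
  set b22 := (I₁ ×ˢ J₁) ×ˢ ((I₂ ×ˢ J₂) ∩ Aᶜ) with hb22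
  set b12 := m ⁻¹' (((I₁ ×ˢ J₂) ∩ Aᶜ) ×ˢ (I₂ ×ˢ J₁)) with hb12
  set b21 := m ⁻¹' ((I₁ ×ˢ J₂) ×ˢ ((I₂ ×ˢ J₁) ∩ Aᶜ)) with hb21
  have hGpos : 0 < volume G := by
    have hcov : (I₁ ×ˢ J₁) ×ˢ (I₂ ×ˢ J₂) ⊆ G ∪ b11 ∪ b12 ∪ b21 ∪ b22 := by
      rintro ⟨⟨x₁,y₁⟩,⟨x₂,y₂⟩⟩ ⟨⟨hx₁,hy₁⟩,⟨hx₂,hy₂⟩⟩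
      by_cases c11 : (x₁,y₁) ∈ A
      · by_cases c12 : (x₁,y₂) ∈ A
        · by_cases c21 : (x₂,y₁) ∈ A
          · by_cases c22 : (x₂,y₂) ∈ A
            · exact Or.inl (Or.inl (Or.inl (Or.inl ⟨⟨⟨hx₁,hy₁⟩,hx₂,hy₂⟩, c11, c12, c21, c22⟩)))
            · exact Or.inr ⟨⟨hx₁,hy₁⟩,⟨hx₂,hy₂⟩,c22⟩
          · exact Or.inl (Or.inr ⟨⟨hx₁,hy₂⟩,⟨hx₂,hy₁⟩,c21⟩)
        · exact Or.inl (Or.inl (Or.inr ⟨⟨⟨hx₁,hy₂⟩,c12⟩,hx₂,hy₁⟩))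
      · exact Or.inl (Or.inl (Or.inl (Or.inr ⟨⟨⟨hx₁,hy₁⟩,c11⟩,hx₂,hy₂⟩)))
    have hbb : ∀ b ∈ [b11, b12, b21, b22], volume b ≤ ENNReal.ofReal (9/256*r^4) := by
      have hnum : ENNReal.ofReal (r^2/16) * ENNReal.ofReal (9/16*r^2)
          = ENNReal.ofReal (9/256*r^4) := by
        rw [← ENNReal.ofReal_mul (by positivity)]; congr 1; ring
      intro b hb
      have key : ∀ (S : Set (ℝ×ℝ)) (IJ : Set (ℝ×ℝ)), S ⊆ closedBall p r →
          volume IJ = ENNReal.ofReal (9/16*r^2) →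
          volume ((S ∩ Aᶜ) ×ˢ IJ) ≤ ENNReal.ofReal (9/256*r^4) := by
        intro S IJ hS hIJ
        rw [Measure.volume_eq_prod, Measure.prod_prod, hIJ]
        rw [← hnum]
        exact mul_le_mul_left (hbad S hS) _
      have key2 : ∀ (S : Set (ℝ×ℝ)) (IJ : Set (ℝ×ℝ)), S ⊆ closedBall p r →
          volume IJ = ENNReal.ofReal (9/16*r^2) →
          volume (IJ ×ˢ (S ∩ Aᶜ)) ≤ ENNReal.ofReal (9/256*r^4) := by
        intro S IJ hS hIJ
        rw [Measure.volume_eq_prod, Measure.prod_prod, hIJ, ← hnum, mul_comm]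
        exact mul_le_mul_left (hbad S hS) _
      simp only [List.mem_cons, List.not_mem_nil, or_false] at hb
      rcases hb with hb | hb | hb | hb <;> subst hb
      · exact key _ _ (hsubB _ _ hI₁s hJ₁s) hv22
      · rw [hb12, mp_cross.measure_preimage
          ((((measurableSet_Icc.prod measurableSet_Icc).inter hAm.compl).prod
            (measurableSet_Icc.prod measurableSet_Icc)).nullMeasurableSet)]
        exact key _ _ (hsubB _ _ hI₁s hJ₂s) hv12
      · rw [hb21, mp_cross.measure_preimage
          (((measurableSet_Icc.prod measurableSet_Icc).prod
            ((measurableSet_Icc.prod measurableSet_Icc).inter hAm.compl)).nullMeasurableSet)]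
        exact key2 _ _ (hsubB _ _ hI₂s hJ₁s) (hv2 _ _ (hvIJ' _) (hvIJ _))
      · exact key2 _ _ (hsubB _ _ hI₂s hJ₂s) hv11
    by_contra h0
    push_neg at h0
    have hG0 : volume G = 0 := le_antisymm h0 zero_le
    have hsum : volume ((I₁ ×ˢ J₁) ×ˢ (I₂ ×ˢ J₂))
        ≤ volume G + volume b11 + volume b12 + volume b21 + volume b22 := by
      refine le_trans (measure_mono hcov) ?_
      refine le_trans (measure_union_le _ _) ?_
      refine add_le_add ?_ le_rfl
      refine le_trans (measure_union_le _ _) ?_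
      refine add_le_add ?_ le_rfl
      refine le_trans (measure_union_le _ _) ?_
      refine add_le_add ?_ le_rfl
      exact measure_union_le _ _
    have hvR : volume ((I₁ ×ˢ J₁) ×ˢ (I₂ ×ˢ J₂)) = ENNReal.ofReal (81/256*r^4) := by
      rw [Measure.volume_eq_prod (ℝ×ℝ) (ℝ×ℝ), Measure.prod_prod, hv11, hv22,
        ← ENNReal.ofReal_mul (by positivity)]
      congr 1; ring
    have hb4 : volume b11 + volume b12 + volume b21 + volume b22
        ≤ ENNReal.ofReal (36/256*r^4) := by
      have e : ENNReal.ofReal (9/256*r^4) + ENNReal.ofReal (9/256*r^4)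
          + ENNReal.ofReal (9/256*r^4) + ENNReal.ofReal (9/256*r^4)
          = ENNReal.ofReal (36/256*r^4) := by
        rw [← ENNReal.ofReal_add (by positivity) (by positivity),
          ← ENNReal.ofReal_add (by positivity) (by positivity),
          ← ENNReal.ofReal_add (by positivity) (by positivity)]
        congr 1; ring
      rw [← e]
      gcongr <;> apply hbb <;> simp
    rw [hG0, zero_add, hvR] at hsum
    have hfin : ENNReal.ofReal (81/256*r^4) ≤ ENNReal.ofReal (36/256*r^4) :=
      le_trans hsum hb4
    rw [ENNReal.ofReal_le_ofReal_iff (by positivity)] at hfin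
    nlinarith [pow_pos hr0 4]
  -- Step 7: pick a good quadruple at which the a.e. identity also holds
  have hnull : volume {q : (ℝ×ℝ)×(ℝ×ℝ) | ¬ (q.1.1 < q.2.1 → q.1.2 < q.2.2 →
      h (q.2.1, q.2.2) - h (q.1.1, q.2.2) - h (q.2.1, q.1.2) + h (q.1.1, q.1.2)
        = ∫ p in Icc q.1.1 q.2.1 ×ˢ Icc q.1.2 q.2.2, g p)} = 0 := by
    rw [← ae_iff]
    exact hrect'
  have hGpos' : 0 < volume (G \ {q : (ℝ×ℝ)×(ℝ×ℝ) | ¬ (q.1.1 < q.2.1 → q.1.2 < q.2.2 →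
      h (q.2.1, q.2.2) - h (q.1.1, q.2.2) - h (q.2.1, q.1.2) + h (q.1.1, q.1.2)
        = ∫ p in Icc q.1.1 q.2.1 ×ˢ Icc q.1.2 q.2.2, g p)}) := by
    rwa [measure_diff_null hnull]
  obtain ⟨q, hqG, hqN⟩ := nonempty_of_measure_ne_zero hGpos'.ne'
  obtain ⟨⟨x₁,y₁⟩,⟨x₂,y₂⟩⟩ := q
  obtain ⟨⟨⟨hx₁,hy₁⟩,⟨hx₂,hy₂⟩⟩, c11, c12, c21, c22⟩ := hqG
  have hP := not_not.mp hqN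
  obtain ⟨hx₁l, hx₁u⟩ := hx₁
  obtain ⟨hx₂l, hx₂u⟩ := hx₂
  obtain ⟨hy₁l, hy₁u⟩ := hy₁
  obtain ⟨hy₂l, hy₂u⟩ := hy₂
  have hxlt : x₁ < x₂ := by dsimp only at *; linarith
  have hylt : y₁ < y₂ := by dsimp only at *; linarith
  have hid := hP hxlt hylt
  have hint0 : ∫ z in Icc x₁ x₂ ×ˢ Icc y₁ y₂, g z = 0 := by
    rw [← hid]
    exact heq x₁ x₂ y₁ y₂ c11 c12 c21 c22
  -- Step 8: the contradiction via the Lebesgue point estimate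
  set K := Icc x₁ x₂ ×ˢ Icc y₁ y₂ with hKdef
  have hK : K ⊆ closedBall p r := by
    rw [hball]
    exact prod_mono (Icc_subset_Icc (by linarith) (by linarith))
      (Icc_subset_Icc (by linarith) (by linarith))
  have hx21 : r/2 ≤ x₂ - x₁ := by linarith
  have hy21 : r/2 ≤ y₂ - y₁ := by linarith
  have hKg : IntegrableOn g K volume :=
    hgloc.integrableOn_isCompact (isCompact_Icc.prod isCompact_Icc)
  have hBfin : volume (closedBall p r) < ⊤ := measure_closedBall_lt_top
  have hKfin : volume K < ⊤ := lt_of_le_of_lt (measure_mono hK) hBfin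
  have hKc : IntegrableOn (fun _ : ℝ×ℝ => g p) K volume :=
    integrableOn_const hKfin.ne
  have hBg : IntegrableOn g (closedBall p r) volume :=
    hgloc.integrableOn_isCompact (isCompact_closedBall p r)
  have hBsub : IntegrableOn (fun z => ‖g z - g p‖) (closedBall p r) volume :=
    (hBg.sub (integrableOn_const hBfin.ne)).norm
  have hvolK : (volume K).toReal = (x₂-x₁)*(y₂-y₁) := by
    rw [hKdef, Measure.volume_eq_prod, Measure.prod_prod, Real.volume_Icc, Real.volume_Icc,
      ← ENNReal.ofReal_mul (by linarith), ENNReal.toReal_ofReal (by nlinarith)]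
  have hvolB : (volume (closedBall p r)).toReal = 4*r^2 := by
    rw [hball, Measure.volume_eq_prod, Measure.prod_prod, Real.volume_Icc, Real.volume_Icc,
      show p.1 + r - (p.1 - r) = 2*r by ring, show p.2 + r - (p.2 - r) = 2*r by ring,
      ← ENNReal.ofReal_mul (by linarith), ENNReal.toReal_ofReal (by nlinarith)]
    ring
  have e2 : |(x₂-x₁)*(y₂-y₁)*(g p)| = ‖∫ z in K, (g p - g z) ∂volume‖ := by
    rw [integral_sub hKc hKg, hint0, sub_zero, setIntegral_const, smul_eq_mul, measureReal_def, hvolK,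
      Real.norm_eq_abs]
  have e3 : ‖∫ z in K, (g p - g z) ∂volume‖ ≤ ∫ z in K, ‖g z - g p‖ ∂volume := by
    refine le_trans (norm_integral_le_integral_norm _) (le_of_eq ?_)
    simp_rw [norm_sub_rev (g p)]
  have e5 : ∫ z in K, ‖g z - g p‖ ∂volume ≤ ∫ z in closedBall p r, ‖g z - g p‖ ∂volume :=
    setIntegral_mono_set hBsub (Eventually.of_forall fun z => norm_nonneg _)
      (HasSubset.Subset.eventuallyLE hK)
  have e6 : ∫ z in closedBall p r, ‖g z - g p‖ ∂volume
      = (4*r^2) * ⨍ z in closedBall p r, ‖g z - g p‖ := by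
    rw [setAverage_eq, measureReal_def, hvolB, smul_eq_mul, ← mul_assoc, mul_inv_cancel₀ (by positivity), one_mul]
  have habs : |(x₂-x₁)*(y₂-y₁)*(g p)| = (x₂-x₁)*(y₂-y₁)*|g p| := by
    rw [abs_mul, abs_of_nonneg (by nlinarith)]
  have hchain : (x₂-x₁)*(y₂-y₁)*|g p| ≤ (4*r^2) * ⨍ z in closedBall p r, ‖g z - g p‖ := by
    rw [← habs, ← e6]
    exact le_trans (le_of_eq e2) (le_trans e3 e5)
  have hlt : (4*r^2) * ⨍ z in closedBall p r, ‖g z - g p‖ < (4*r^2) * (|g p|/32) :=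
    mul_lt_mul_of_pos_left hrleb (by positivity)
  nlinarith [mul_le_mul hx21 hy21 (by linarith) (by linarith)]
end

section
/- Let h : ℝ² → ℝ be a real-analytic function that cannot be represented as a sum u(x) + v(y) of a function of x and a function of y (equivalently, whose mixed second derivative ∂²h/∂x∂y is not identically zero). Then for every set A ⊆ ℝ² with Lebesgue measure λ₂(A) > 0 there exist points x₁, x₂, y₁, y₂ ∈ ℝ with (x₁,y₁), (x₁,y₂), (x₂,y₁), (x₂,y₂) ∈ A and h(x₁,y₁) + h(x₂,y₂) < h(x₁,y₂) + h(x₂,y₁). -/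
open MeasureTheory Filter Metric Set
open scoped ENNReal

/-- An everywhere-analytic function on `ℝ` vanishing on a set of positive measure is zero. -/
lemma zero1 (f : ℝ → ℝ) (hf : ∀ x, AnalyticAt ℝ f x) {s : Set ℝ}
    (hs : volume s ≠ 0) (h0 : ∀ x ∈ s, f x = 0) : ∀ x, f x = 0 := by
  obtain ⟨z, hzs, hz⟩ := MeasureTheory.exists_mem_forall_mem_nhdsWithin_pos_measure hs
  have hfreq : ∃ᶠ y in nhdsWithin z {z}ᶜ, f y = 0 := by
    rw [frequently_iff]
    intro U hU
    obtain ⟨V, hVopen, hzV, hVU⟩ := mem_nhdsWithin.1 hU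
    have hpos : 0 < volume (s ∩ V) :=
      hz _ (inter_mem_nhdsWithin s (hVopen.mem_nhds hzV))
    have hnsub : ¬ (s ∩ V ⊆ {z}) := by
      intro hsub
      have := measure_mono_null hsub Real.volume_singleton
      exact hpos.ne' this
    obtain ⟨y, ⟨hys, hyV⟩, hyne⟩ := not_subset.1 hnsub
    exact ⟨y, hVU ⟨hyV, hyne⟩, h0 y hys⟩
  have hAOn : AnalyticOnNhd ℝ f Set.univ := fun x _ => hf x
  have := hAOn.eqOn_zero_of_preconnected_of_frequently_eq_zero isPreconnected_univ
    (mem_univ z) hfreq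
  exact fun x => this (mem_univ x)

/-- 2D version. -/
lemma zero2 (g : ℝ × ℝ → ℝ) (hg : ∀ p, AnalyticAt ℝ g p) {s : Set (ℝ × ℝ)}
    (hm : MeasurableSet s) (hs : volume s ≠ 0) (h0 : ∀ p ∈ s, g p = 0) : ∀ p, g p = 0 := by
  set T := {x : ℝ | volume (Prod.mk x ⁻¹' s) ≠ 0} with hTdef
  have hT : volume T ≠ 0 := by
    intro hT0
    apply hs
    rw [Measure.volume_eq_prod]
    refine (Measure.measure_prod_null hm).2 ?_
    rw [Filter.EventuallyEq, ae_iff]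
    convert hT0 using 2; rfl
  have hx0 : ∀ x ∈ T, ∀ y, g (x, y) = 0 := by
    intro x hx
    exact zero1 (fun y => g (x, y))
      (fun y => (hg _).comp (analyticAt_const.prod analyticAt_id)) hx
      (fun y hy => h0 _ hy)
  rintro ⟨x, y⟩
  exact zero1 (fun x => g (x, y))
    (fun x => (hg _).comp (analyticAt_id.prod analyticAt_const)) hT
    (fun x hx => hx0 x hx y) x

/-- 4D version. -/
lemma zero4 (g : (ℝ × ℝ) × (ℝ × ℝ) → ℝ) (hg : ∀ p, AnalyticAt ℝ g p)
    {s : Set ((ℝ × ℝ) × (ℝ × ℝ))}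
    (hm : MeasurableSet s) (hs : volume s ≠ 0) (h0 : ∀ p ∈ s, g p = 0) : ∀ p, g p = 0 := by
  set T := {w : ℝ × ℝ | volume (Prod.mk w ⁻¹' s) ≠ 0} with hTdef
  have hTm : MeasurableSet T := by
    have : Measurable fun w : ℝ × ℝ => volume (Prod.mk w ⁻¹' s) :=
      measurable_measure_prodMk_left hm
    exact this (measurableSet_singleton 0).compl
  have hT : volume T ≠ 0 := by
    intro hT0
    apply hs
    rw [Measure.volume_eq_prod]
    refine (Measure.measure_prod_null hm).2 ?_
    rw [Filter.EventuallyEq, ae_iff]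
    convert hT0 using 2; rfl
  have hx0 : ∀ w ∈ T, ∀ z, g (w, z) = 0 := by
    intro w hw
    exact zero2 (fun z => g (w, z))
      (fun z => (hg _).comp (analyticAt_const.prod analyticAt_id))
      (measurable_prodMk_left hm) hw (fun z hz => h0 _ hz)
  rintro ⟨w, z⟩
  exact zero2 (fun w => g (w, z))
    (fun w => (hg _).comp (analyticAt_id.prod analyticAt_const)) hTm hT
    (fun w hw => hx0 w hw z) w

/-- Density lemma: a small closed ball mostly filled by `A`. -/
lemma density_ball {A : Set (ℝ × ℝ)} (hA : MeasurableSet A) (h0 : volume A ≠ 0) :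
    ∃ (z : ℝ × ℝ) (r : ℝ), 0 < r ∧
      8 * volume (closedBall z r \ A) ≤ volume (closedBall z r) := by
  have hae := Besicovitch.ae_tendsto_measure_inter_div (volume : Measure (ℝ × ℝ)) A
  have hne : (volume : Measure (ℝ × ℝ)).restrict A ≠ 0 := by
    intro hcon
    apply h0
    have := Measure.restrict_apply_self (volume : Measure (ℝ × ℝ)) A
    rw [hcon] at this
    simpa using this.symm
  have : ∃ z, Filter.Tendsto
      (fun r => volume (A ∩ closedBall z r) / volume (closedBall z r)) (nhdsWithin 0 (Set.Ioi 0))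
      (nhds 1) := by
    have : (ae ((volume : Measure (ℝ × ℝ)).restrict A)).NeBot := ae_neBot.2 hne
    exact hae.exists
  obtain ⟨z, hz⟩ := this
  have h78 : ∀ᶠ r in nhdsWithin 0 (Set.Ioi 0),
      (7/8 : ℝ≥0∞) < volume (A ∩ closedBall z r) / volume (closedBall z r) :=
    hz.eventually_const_lt (by rw [ENNReal.div_lt_iff (by norm_num) (by norm_num)]; norm_num)
  obtain ⟨r, hr78, hrpos⟩ := (h78.and self_mem_nhdsWithin).exists
  refine ⟨z, r, hrpos, ?_⟩
  set Q := closedBall z r with hQ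
  have hQ0 : volume Q ≠ 0 := (measure_closedBall_pos volume z hrpos).ne'
  have hQtop : volume Q ≠ ∞ := measure_closedBall_lt_top.ne
  -- from the ratio bound: 7 * volume Q ≤ 8 * volume (Q ∩ A)
  have hmul : (7/8 : ℝ≥0∞) * volume Q ≤ volume (A ∩ Q) :=
    ENNReal.mul_le_of_le_div hr78.le
  have hsum : volume (Q ∩ A) + volume (Q \ A) = volume Q := measure_inter_add_diff Q hA
  have h7 : 7 * volume Q ≤ 8 * volume (Q ∩ A) := by
    have := mul_le_mul_right hmul (8 : ℝ≥0∞)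
    calc 7 * volume Q = 8 * ((7/8 : ℝ≥0∞) * volume Q) := by
          rw [← mul_assoc]
          rw [ENNReal.mul_div_cancel' (by norm_num) (by norm_num)]
      _ ≤ 8 * volume (A ∩ Q) := this
      _ = 8 * volume (Q ∩ A) := by rw [Set.inter_comm]
  -- conclude 8 * volume (Q \ A) ≤ volume Q
  have key : 7 * volume Q + 8 * volume (Q \ A) ≤ 7 * volume Q + volume Q := by
    calc 7 * volume Q + 8 * volume (Q \ A) ≤ 8 * volume (Q ∩ A) + 8 * volume (Q \ A) := by
          exact add_le_add_left h7 _
      _ = 8 * volume Q := by rw [← mul_add, hsum]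
      _ = 7 * volume Q + volume Q := by ring
  exact (ENNReal.add_le_add_iff_left (ENNReal.mul_ne_top (by norm_num) hQtop)).1 key

/-- The coordinate-shuffling map is volume preserving. -/
lemma mp_phi : MeasurePreserving
    (fun p : (ℝ × ℝ) × (ℝ × ℝ) => ((p.1.1, p.2.2), (p.1.2, p.2.1)))
    (volume : Measure ((ℝ × ℝ) × (ℝ × ℝ))) volume := by
  have h1 : MeasurePreserving
      (MeasurableEquiv.prodAssoc : (ℝ × ℝ) × (ℝ × ℝ) ≃ᵐ ℝ × (ℝ × (ℝ × ℝ)))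
      volume volume := volume_preserving_prodAssoc
  have hswap : MeasurePreserving (Prod.swap : (ℝ × ℝ) × ℝ → ℝ × (ℝ × ℝ)) volume volume := by
    have := Measure.measurePreserving_swap (μ := (volume : Measure (ℝ × ℝ)))
      (ν := (volume : Measure ℝ))
    rwa [← Measure.volume_eq_prod, ← Measure.volume_eq_prod] at this
  have hinner : MeasurePreserving
      (fun q : ℝ × (ℝ × ℝ) => Prod.swap (MeasurableEquiv.prodAssoc.symm q))
      volume volume :=
    hswap.comp (MeasurePreserving.symm
      (MeasurableEquiv.prodAssoc : (ℝ × ℝ) × ℝ ≃ᵐ ℝ × (ℝ × ℝ)) volume_preserving_prodAssoc)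
  have hmid : MeasurePreserving
      (Prod.map (id : ℝ → ℝ) (fun q : ℝ × (ℝ × ℝ) => Prod.swap (MeasurableEquiv.prodAssoc.symm q)))
      volume volume := by
    have := (MeasurePreserving.id (volume : Measure ℝ)).prod hinner
    rwa [← Measure.volume_eq_prod] at this
  have hfinal : MeasurePreserving
      ((MeasurableEquiv.prodAssoc : (ℝ × ℝ) × (ℝ × ℝ) ≃ᵐ ℝ × (ℝ × (ℝ × ℝ))).symm)
      volume volume :=
    MeasurePreserving.symm _ volume_preserving_prodAssoc
  have hcomp := hfinal.comp (hmid.comp h1)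
  convert hcomp using 1
  funext p; rfl

/-- If `h : ℝ² → ℝ` is real-analytic and cannot be written as `u(x) + v(y)`, then on every
set of positive Lebesgue measure one can find a quadruple on which `h` strictly violates
the degeneracy identity. -/
theorem nondegenerate_of_analytic_not_sum
    (h : ℝ × ℝ → ℝ) (ha : ∀ p : ℝ × ℝ, AnalyticAt ℝ h p)
    (hns : ¬ ∃ (u v : ℝ → ℝ), ∀ x y : ℝ, h (x, y) = u x + v y) :
    ∀ A : Set (ℝ × ℝ), MeasurableSet A → 0 < volume A →
      ∃ x₁ x₂ y₁ y₂ : ℝ, (x₁, y₁) ∈ A ∧ (x₁, y₂) ∈ A ∧ (x₂, y₁) ∈ A ∧ (x₂, y₂) ∈ A ∧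
        h (x₁, y₁) + h (x₂, y₂) < h (x₁, y₂) + h (x₂, y₁) := by
  intro A hAm hApos
  by_contra hcon
  push_neg at hcon
  -- the "mixed difference" function
  set G : (ℝ × ℝ) × (ℝ × ℝ) → ℝ := fun p =>
    h (p.1.1, p.1.2) + h (p.2.1, p.2.2) - h (p.1.1, p.2.2) - h (p.2.1, p.1.2) with hGdef
  have hGa : ∀ p, AnalyticAt ℝ G p := by
    intro p
    have h11 : AnalyticAt ℝ (fun p : (ℝ × ℝ) × (ℝ × ℝ) => p.1.1) p :=
      analyticAt_fst.comp analyticAt_fst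
    have h12 : AnalyticAt ℝ (fun p : (ℝ × ℝ) × (ℝ × ℝ) => p.1.2) p :=
      analyticAt_snd.comp analyticAt_fst
    have h21 : AnalyticAt ℝ (fun p : (ℝ × ℝ) × (ℝ × ℝ) => p.2.1) p :=
      analyticAt_fst.comp analyticAt_snd
    have h22 : AnalyticAt ℝ (fun p : (ℝ × ℝ) × (ℝ × ℝ) => p.2.2) p :=
      analyticAt_snd.comp analyticAt_snd
    exact ((((ha _).comp₂ h11 h12).add ((ha _).comp₂ h21 h22)).sub
      ((ha _).comp₂ h11 h22)).sub ((ha _).comp₂ h21 h12)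
  -- the set of "rectangles" with all corners in A
  set B : Set ((ℝ × ℝ) × (ℝ × ℝ)) :=
    {p | p.1 ∈ A ∧ p.2 ∈ A ∧ (p.1.1, p.2.2) ∈ A ∧ (p.2.1, p.1.2) ∈ A} with hBdef
  have m3 : Measurable fun p : (ℝ × ℝ) × (ℝ × ℝ) => ((p.1.1, p.2.2) : ℝ × ℝ) :=
    (measurable_fst.fst).prodMk (measurable_snd.snd)
  have m4 : Measurable fun p : (ℝ × ℝ) × (ℝ × ℝ) => ((p.2.1, p.1.2) : ℝ × ℝ) :=
    (measurable_snd.fst).prodMk (measurable_fst.snd)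
  have hBm : MeasurableSet B :=
    (hAm.preimage measurable_fst).inter ((hAm.preimage measurable_snd).inter
      ((hAm.preimage m3).inter (hAm.preimage m4)))
  -- G vanishes on B
  have hGB : ∀ p ∈ B, G p = 0 := by
    rintro ⟨⟨x₁, y₁⟩, ⟨x₂, y₂⟩⟩ ⟨h1, h2, h3, h4⟩
    have a1 := hcon x₁ x₂ y₁ y₂ h1 h3 h4 h2
    have a2 := hcon x₁ x₂ y₂ y₁ h3 h1 h2 h4
    simp only [hGdef]
    linarith
  -- B has positive measure
  have hB0 : volume B ≠ 0 := by
    obtain ⟨z, r, hr, h8⟩ := density_ball hAm hApos.ne'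
    set I := closedBall z.1 r with hI
    set J := closedBall z.2 r with hJ
    have hQ : closedBall z r = I ×ˢ J := (closedBall_prod_same z.1 z.2 r).symm
    rw [hQ] at h8
    set D : Set (ℝ × ℝ) := (I ×ˢ J) \ A with hD
    have hIm : MeasurableSet I := measurableSet_closedBall
    have hJm : MeasurableSet J := measurableSet_closedBall
    have hDm : MeasurableSet D := (hIm.prod hJm).diff hAm
    have hc0 : volume (I ×ˢ J) ≠ 0 := by
      rw [← hQ]; exact (measure_closedBall_pos volume z hr).ne'
    have hctop : volume (I ×ˢ J) ≠ ∞ := by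
      rw [← hQ]; exact measure_closedBall_lt_top.ne
    set c := volume (I ×ˢ J) with hc
    -- the four bad sets
    set φ : (ℝ × ℝ) × (ℝ × ℝ) → (ℝ × ℝ) × (ℝ × ℝ) :=
      fun p => ((p.1.1, p.2.2), (p.1.2, p.2.1)) with hφ
    set Bad1 : Set ((ℝ × ℝ) × (ℝ × ℝ)) := D ×ˢ (I ×ˢ J) with hBad1
    set Bad2 : Set ((ℝ × ℝ) × (ℝ × ℝ)) := (I ×ˢ J) ×ˢ D with hBad2
    set Bad3 : Set ((ℝ × ℝ) × (ℝ × ℝ)) := φ ⁻¹' (D ×ˢ (J ×ˢ I)) with hBad3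
    set Bad4 : Set ((ℝ × ℝ) × (ℝ × ℝ)) := Prod.swap ⁻¹' Bad3 with hBad4
    -- covering
    have hcover : (I ×ˢ J) ×ˢ (I ×ˢ J) ⊆ B ∪ (Bad1 ∪ (Bad2 ∪ (Bad3 ∪ Bad4))) := by
      rintro ⟨⟨x₁, y₁⟩, ⟨x₂, y₂⟩⟩ ⟨⟨hx₁, hy₁⟩, ⟨hx₂, hy₂⟩⟩
      by_cases k1 : ((x₁, y₁) : ℝ × ℝ) ∈ A
      · by_cases k2 : ((x₂, y₂) : ℝ × ℝ) ∈ A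
        · by_cases k3 : ((x₁, y₂) : ℝ × ℝ) ∈ A
          · by_cases k4 : ((x₂, y₁) : ℝ × ℝ) ∈ A
            · exact Or.inl ⟨k1, k2, k3, k4⟩
            · exact Or.inr (Or.inr (Or.inr (Or.inr ⟨⟨⟨hx₂, hy₁⟩, k4⟩, hy₂, hx₁⟩)))
          · exact Or.inr (Or.inr (Or.inr (Or.inl ⟨⟨⟨hx₁, hy₂⟩, k3⟩, hy₁, hx₂⟩)))
        · exact Or.inr (Or.inr (Or.inl ⟨⟨hx₁, hy₁⟩, ⟨⟨hx₂, hy₂⟩, k2⟩⟩))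
      · exact Or.inr (Or.inl ⟨⟨⟨hx₁, hy₁⟩, k1⟩, ⟨hx₂, hy₂⟩⟩)
    -- measure computations
    intro hBz
    have hcab : c = volume I * volume J := by
      rw [hc, Measure.volume_eq_prod, Measure.prod_prod]
    have hswap4 : MeasurePreserving
        (Prod.swap : (ℝ × ℝ) × (ℝ × ℝ) → (ℝ × ℝ) × (ℝ × ℝ)) volume volume := by
      have := Measure.measurePreserving_swap (μ := (volume : Measure (ℝ × ℝ)))
        (ν := (volume : Measure (ℝ × ℝ)))
      rwa [← Measure.volume_eq_prod] at this
    have hDJI : MeasurableSet (D ×ˢ (J ×ˢ I)) := hDm.prod (hJm.prod hIm)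
    have hφm : Measurable φ :=
      ((measurable_fst.fst).prodMk measurable_snd.snd).prodMk
        ((measurable_fst.snd).prodMk measurable_snd.fst)
    have hB3m : MeasurableSet Bad3 := hDJI.preimage hφm
    have e1 : volume Bad1 = volume D * c := by
      rw [hBad1, Measure.volume_eq_prod, Measure.prod_prod, hc]
    have e2 : volume Bad2 = c * volume D := by
      rw [hBad2, Measure.volume_eq_prod, Measure.prod_prod, hc]
    have e3 : volume Bad3 = volume D * c := by
      rw [hBad3, mp_phi.measure_preimage hDJI.nullMeasurableSet,
        Measure.volume_eq_prod, Measure.prod_prod, Measure.volume_eq_prod, Measure.prod_prod,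
        hcab, mul_comm (volume J)]
    have e4 : volume Bad4 = volume D * c := by
      rw [hBad4, hswap4.measure_preimage hB3m.nullMeasurableSet, e3]
    have big : c * c ≤ volume B + (volume Bad1 + (volume Bad2 + (volume Bad3 + volume Bad4))) := by
      calc c * c = volume ((I ×ˢ J) ×ˢ (I ×ˢ J)) := by
            rw [Measure.volume_eq_prod, Measure.prod_prod, hc]
        _ ≤ volume (B ∪ (Bad1 ∪ (Bad2 ∪ (Bad3 ∪ Bad4)))) := measure_mono hcover
        _ ≤ volume B + volume (Bad1 ∪ (Bad2 ∪ (Bad3 ∪ Bad4))) := measure_union_le _ _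
        _ ≤ volume B + (volume Bad1 + volume (Bad2 ∪ (Bad3 ∪ Bad4))) :=
            add_le_add_right (measure_union_le _ _) _
        _ ≤ volume B + (volume Bad1 + (volume Bad2 + volume (Bad3 ∪ Bad4))) :=
            add_le_add_right (add_le_add_right (measure_union_le _ _) _) _
        _ ≤ volume B + (volume Bad1 + (volume Bad2 + (volume Bad3 + volume Bad4))) :=
            add_le_add_right (add_le_add_right (add_le_add_right (measure_union_le _ _) _) _) _
    have big2 : c * c ≤ 4 * (volume D * c) := by
      calc c * c ≤ volume B + (volume Bad1 + (volume Bad2 + (volume Bad3 + volume Bad4))) := big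
        _ = volume D * c + (c * volume D + (volume D * c + volume D * c)) := by
            rw [hBz, e1, e2, e3, e4, zero_add]
        _ = 4 * (volume D * c) := by ring
    have hsmall : 8 * (volume D * c) ≤ c * c := by
      rw [← mul_assoc]
      exact mul_le_mul_left h8 c
    have h2cc : 2 * (c * c) ≤ c * c := by
      calc 2 * (c * c) ≤ 2 * (4 * (volume D * c)) := mul_le_mul_right big2 2
        _ = 8 * (volume D * c) := by ring
        _ ≤ c * c := hsmall
    have hcc0 : c * c ≠ 0 := mul_ne_zero hc0 hc0
    have hcctop : c * c ≠ ∞ := ENNReal.mul_ne_top hctop hctop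
    rw [two_mul] at h2cc
    have : c * c ≤ 0 :=
      (ENNReal.add_le_add_iff_left hcctop).1 (h2cc.trans_eq (add_zero _).symm)
    exact hcc0 (nonpos_iff_eq_zero.1 this)
  -- conclude G ≡ 0 and derive the contradiction
  have hall : ∀ p, G p = 0 := zero4 G hGa hBm hB0 hGB
  refine hns ⟨fun x => h (x, 0) - h (0, 0), fun y => h (0, y), fun x y => ?_⟩
  have := hall ((x, y), (0, 0))
  simp only [hGdef] at this
  show h (x, y) = (h (x, 0) - h (0, 0)) + h (0, y)
  linarith
end

section
/- Let η₁ be a Borel probability measure on ℝⁿ and η₂ a Borel probability measure on ℝᵐ, both absolutely continuous with respect to Lebesgue measure, and let η = η₁ ⊗ η₂. Let h : ℝⁿ × ℝᵐ → ℝ be a Borel measurable function such that for η-almost every point (x₀, y₀) there exist indices i ∈ {1, …, n} and j ∈ {1, …, m} such that in some neighbourhood of (x₀, y₀) the mixed second partial derivative ∂²h/∂xᵢ∂y_j(x,y) exists and is nonzero. Then there do not exist a Borel set A ⊆ ℝⁿ × ℝᵐ with η(A) > 0 and functions u : ℝⁿ → ℝ, v : ℝᵐ → ℝ with h(x,y)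 = u(x) + v(y) for all (x,y) ∈ A. -/
open MeasureTheory Function Set
open scoped ENNReal

set_option maxHeartbeats 1000000 in
lemma measurePreserving_updateSwap (n : ℕ) (i : Fin n) :
    MeasurePreserving (fun q : (Fin n → ℝ) × ℝ => (Function.update q.1 i q.2, q.1 i))
      ((volume : Measure (Fin n → ℝ)).prod (volume : Measure ℝ))
      ((volume : Measure (Fin n → ℝ)).prod (volume : Measure ℝ)) := by
  classical
  set P := {k : Fin n // k = i}
  set N := {k : Fin n // ¬ k = i}
  set e₀ := MeasurableEquiv.piEquivPiSubtypeProd (fun _ : Fin n => ℝ) (· = i) with he₀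
  set e₁ := MeasurableEquiv.funUnique P ℝ with he₁
  have h₀ : MeasurePreserving e₀ volume
      ((volume : Measure (P → ℝ)).prod (volume : Measure (N → ℝ))) := by
    have h := MeasureTheory.volume_preserving_piEquivPiSubtypeProd (fun _ : Fin n => ℝ) (· = i)
    rw [Measure.volume_eq_prod] at h
    convert h using 2 <;> congr!
  have h₀' : MeasurePreserving e₀.symm
      ((volume : Measure (P → ℝ)).prod (volume : Measure (N → ℝ))) volume := h₀.symm e₀
  have h₁ : MeasurePreserving e₁ volume volume :=
    MeasureTheory.volume_preserving_funUnique _ _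
  have h₁' : MeasurePreserving e₁.symm volume volume := h₁.symm e₁
  set F : (Fin n → ℝ) × ℝ → (ℝ × (N → ℝ)) × ℝ :=
    fun q => ((e₁ (e₀ q.1).1, (e₀ q.1).2), q.2) with hF
  set Finv : (ℝ × (N → ℝ)) × ℝ → (Fin n → ℝ) × ℝ :=
    fun q => (e₀.symm (e₁.symm q.1.1, q.1.2), q.2) with hFinv
  set S : (ℝ × (N → ℝ)) × ℝ → (ℝ × (N → ℝ)) × ℝ :=
    fun q => ((q.2, q.1.2), q.1.1) with hS
  have hid : MeasurePreserving (id : ℝ → ℝ) volume volume := MeasurePreserving.id _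
  have hidN : MeasurePreserving (id : (N → ℝ) → (N → ℝ)) volume volume := MeasurePreserving.id _
  have hFmp : MeasurePreserving F (volume.prod volume)
      (((volume : Measure ℝ).prod (volume : Measure (N → ℝ))).prod volume) := by
    have : F = Prod.map ((Prod.map e₁ (id : (N → ℝ) → (N → ℝ))) ∘ e₀) (id : ℝ → ℝ) := rfl
    rw [this]
    exact ((h₁.prod hidN).comp h₀).prod hid
  have hFinvmp : MeasurePreserving Finv
      (((volume : Measure ℝ).prod (volume : Measure (N → ℝ))).prod volume)
      (volume.prod volume) := by
    have : Finv = Prod.map (e₀.symm ∘ (Prod.map e₁.symm (id : (N → ℝ) → (N → ℝ)))) (id : ℝ → ℝ) := rfl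
    rw [this]
    exact (h₀'.comp (h₁'.prod hidN)).prod hid
  have hSmp : MeasurePreserving S
      (((volume : Measure ℝ).prod (volume : Measure (N → ℝ))).prod volume)
      (((volume : Measure ℝ).prod (volume : Measure (N → ℝ))).prod volume) := by
    have c1 : MeasurePreserving (MeasurableEquiv.prodAssoc : (ℝ × (N → ℝ)) × ℝ ≃ᵐ ℝ × ((N → ℝ) × ℝ))
        (((volume : Measure ℝ).prod volume).prod volume) (volume.prod (volume.prod volume)) :=
      measurePreserving_prodAssoc _ _ _
    have c2 : MeasurePreserving (Prod.map (id : ℝ → ℝ) (Prod.swap : (N → ℝ) × ℝ → ℝ × (N → ℝ)))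
        ((volume : Measure ℝ).prod ((volume : Measure (N → ℝ)).prod volume))
        ((volume : Measure ℝ).prod ((volume : Measure ℝ).prod volume)) :=
      hid.prod Measure.measurePreserving_swap
    have c3 : MeasurePreserving (Prod.swap : ℝ × (ℝ × (N → ℝ)) → (ℝ × (N → ℝ)) × ℝ)
        ((volume : Measure ℝ).prod ((volume : Measure ℝ).prod volume))
        (((volume : Measure ℝ).prod volume).prod volume) := Measure.measurePreserving_swap
    have : S = (Prod.swap : ℝ × (ℝ × (N → ℝ)) → (ℝ × (N → ℝ)) × ℝ) ∘
        (Prod.map (id : ℝ → ℝ) (Prod.swap : (N → ℝ) × ℝ → ℝ × (N → ℝ))) ∘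
        (MeasurableEquiv.prodAssoc : (ℝ × (N → ℝ)) × ℝ ≃ᵐ ℝ × ((N → ℝ) × ℝ)) := rfl
    rw [this]
    exact c3.comp (c2.comp c1)
  have hcomp : MeasurePreserving (Finv ∘ S ∘ F) (volume.prod volume) (volume.prod volume) :=
    hFinvmp.comp (hSmp.comp hFmp)
  have heq : (fun q : (Fin n → ℝ) × ℝ => (Function.update q.1 i q.2, q.1 i)) = Finv ∘ S ∘ F := by
    funext q
    simp only [hF, hS, hFinv, Function.comp_apply]
    refine Prod.ext ?_ ?_
    · funext k
      by_cases hk : k = i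
      · subst hk
        simp [he₀, he₁, MeasurableEquiv.piEquivPiSubtypeProd, MeasurableEquiv.funUnique,
          Equiv.piEquivPiSubtypeProd, Equiv.funUnique, Function.update]
      · simp [he₀, he₁, MeasurableEquiv.piEquivPiSubtypeProd, MeasurableEquiv.funUnique,
          Equiv.piEquivPiSubtypeProd, Equiv.funUnique, Function.update, hk]
    · simp only [he₀, he₁, MeasurableEquiv.piEquivPiSubtypeProd, MeasurableEquiv.funUnique,
        Equiv.piEquivPiSubtypeProd, Equiv.funUnique, MeasurableEquiv.coe_mk, Equiv.coe_fn_mk]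
      exact (congrArg q.1 (Subtype.prop (default : P))).symm
  rw [heq]
  exact hcomp

set_option maxHeartbeats 1000000 in
lemma exists_rectangle {Z : Type*} [MeasurableSpace Z] (μ : Measure Z) [SigmaFinite μ]
    (D : Set (Z × (ℝ × ℝ))) (hD : MeasurableSet D)
    (hpos : (μ.prod ((volume : Measure ℝ).prod volume)) D ≠ 0) :
    ∃ z s₁ s₂ t₁ t₂, s₁ ≠ s₂ ∧ t₁ ≠ t₂ ∧ (z, (s₁, t₁)) ∈ D ∧ (z, (s₁, t₂)) ∈ D ∧
      (z, (s₂, t₁)) ∈ D ∧ (z, (s₂, t₂)) ∈ D := by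
  classical
  by_contra hc
  push_neg at hc
  set f : Z × (ℝ × ℝ) → ℝ≥0∞ := D.indicator 1 with hf
  have hfm : Measurable f := measurable_one.indicator hD
  set F : Z → ℝ → ℝ → ℝ≥0∞ := fun z s t => f (z, (s, t)) with hF
  -- pointwise values
  have hFval : ∀ z s t, F z s t = if (z, (s, t)) ∈ D then 1 else 0 := by
    intro z s t
    simp [hF, hf, Set.indicator_apply]
  -- fact1
  have fact1 : ∀ z s₁ s₂, s₁ ≠ s₂ → ∫⁻ t, F z s₁ t * F z s₂ t = 0 := by
    intro z s₁ s₂ hs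
    have hsub : {t : ℝ | (z, (s₁, t)) ∈ D ∧ (z, (s₂, t)) ∈ D}.Subsingleton := by
      intro t₁ ht₁ t₂ ht₂
      by_contra htne
      exact hc z s₁ s₂ t₁ t₂ hs htne ht₁.1 ht₂.1 ht₁.2 ht₂.2
    have hzero : volume {t : ℝ | (z, (s₁, t)) ∈ D ∧ (z, (s₂, t)) ∈ D} = 0 :=
      hsub.measure_zero _
    have hle : ∀ t, F z s₁ t * F z s₂ t ≤
        ({t : ℝ | (z, (s₁, t)) ∈ D ∧ (z, (s₂, t)) ∈ D}).indicator (fun _ => (1 : ℝ≥0∞)) t := by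
      intro t
      rw [hFval, hFval, Set.indicator_apply]
      by_cases h1 : (z, (s₁, t)) ∈ D <;> by_cases h2 : (z, (s₂, t)) ∈ D <;>
        simp [h1, h2, Set.mem_setOf_eq]
    refine le_antisymm ?_ (zero_le)
    calc ∫⁻ t, F z s₁ t * F z s₂ t ≤
        ∫⁻ t, ({t : ℝ | (z, (s₁, t)) ∈ D ∧ (z, (s₂, t)) ∈ D}).indicator (fun _ => (1:ℝ≥0∞)) t :=
          lintegral_mono hle
      _ ≤ 1 * volume {t : ℝ | (z, (s₁, t)) ∈ D ∧ (z, (s₂, t)) ∈ D} :=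
          lintegral_indicator_const_le _ _
      _ = 0 := by rw [hzero, mul_zero]
  -- the function G
  set G : Z × (ℝ × ℝ) → ℝ≥0∞ := fun w => ∫⁻ t, F w.1 w.2.1 t * F w.1 w.2.2 t with hG
  have hGm : Measurable G := by
    apply Measurable.lintegral_prod_right'
      (f := fun (w : (Z × (ℝ × ℝ)) × ℝ) => F w.1.1 w.1.2.1 w.2 * F w.1.1 w.1.2.2 w.2)
    apply Measurable.mul
    · exact hfm.comp ((measurable_fst.comp measurable_fst).prodMk
        (((measurable_fst.comp (measurable_snd.comp measurable_fst))).prodMk measurable_snd))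
    · exact hfm.comp ((measurable_fst.comp measurable_fst).prodMk
        (((measurable_snd.comp (measurable_snd.comp measurable_fst))).prodMk measurable_snd))
  -- K = 0
  have hK : ∫⁻ w, G w * G w ∂(μ.prod ((volume : Measure ℝ).prod volume)) = 0 := by
    rw [lintegral_prod (fun w => G w * G w) (hGm.mul hGm).aemeasurable]
    have : ∀ z, ∫⁻ p : ℝ × ℝ, G (z, p) * G (z, p) ∂((volume : Measure ℝ).prod volume) = 0 := by
      intro z
      rw [lintegral_prod]
      · have inner : ∀ s₁ : ℝ, ∫⁻ s₂, G (z, (s₁, s₂)) * G (z, (s₁, s₂)) = 0 := by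
          intro s₁
          have hle : ∀ s₂ : ℝ, G (z, (s₁, s₂)) * G (z, (s₁, s₂)) ≤
              ({s₁} : Set ℝ).indicator (fun _ => (⊤ : ℝ≥0∞)) s₂ := by
            intro s₂
            by_cases hs : s₁ = s₂
            · subst hs; simp [Set.indicator_apply]
            · have := fact1 z s₁ s₂ hs
              simp only [hG]
              rw [show (∫⁻ t, F (z, (s₁, s₂)).1 (z, (s₁, s₂)).2.1 t *
                  F (z, (s₁, s₂)).1 (z, (s₁, s₂)).2.2 t) = 0 from this, zero_mul]
              exact zero_le
          refine le_antisymm ?_ (zero_le)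
          calc ∫⁻ s₂, G (z, (s₁, s₂)) * G (z, (s₁, s₂))
              ≤ ∫⁻ s₂, ({s₁} : Set ℝ).indicator (fun _ => (⊤ : ℝ≥0∞)) s₂ := lintegral_mono hle
            _ ≤ ⊤ * volume ({s₁} : Set ℝ) := lintegral_indicator_const_le _ _
            _ = 0 := by rw [Real.volume_singleton, mul_zero]
        simp only [inner, lintegral_zero]
      · exact ((hGm.mul hGm).comp (measurable_prodMk_left)).aemeasurable
    simp only [this, lintegral_zero]
  -- G vanishes a.e., hence its integral vanishes
  have hGae : G =ᵐ[μ.prod ((volume : Measure ℝ).prod volume)] 0 := by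
    have hzero := (lintegral_eq_zero_iff (hGm.mul hGm)).1 hK
    filter_upwards [hzero] with w hw
    exact (mul_self_eq_zero).1 hw
  have hGint : ∫⁻ w, G w ∂(μ.prod ((volume : Measure ℝ).prod volume)) = 0 := by
    rw [lintegral_congr_ae hGae]; simp
  -- the single-marginal function
  set Rf : Z × ℝ → ℝ≥0∞ := fun w => ∫⁻ s, F w.1 s w.2 with hRf
  have hRm : Measurable Rf := by
    apply Measurable.lintegral_prod_right'
      (f := fun (w : (Z × ℝ) × ℝ) => F w.1.1 w.2 w.1.2)
    exact hfm.comp ((measurable_fst.comp measurable_fst).prodMk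
      (measurable_snd.prodMk (measurable_snd.comp measurable_fst)))
  -- rewrite ∫ G as ∫∫ Rf * Rf
  have hGrw : ∫⁻ w, G w ∂(μ.prod ((volume : Measure ℝ).prod volume))
      = ∫⁻ zt, Rf zt * Rf zt ∂(μ.prod (volume : Measure ℝ)) := by
    rw [lintegral_prod _ hGm.aemeasurable, lintegral_prod (fun zt => Rf zt * Rf zt) (hRm.mul hRm).aemeasurable]
    congr 1
    funext z
    have hmz : Measurable (fun q : ℝ × ℝ => F z q.1 q.2) :=
      hfm.comp (measurable_const.prodMk measurable_id)
    rw [lintegral_prod]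
    swap
    · exact ((hGm.comp (measurable_prodMk_left))).aemeasurable
    have step1 : ∀ s₁ : ℝ, ∫⁻ s₂, G (z, (s₁, s₂)) = ∫⁻ t, F z s₁ t * Rf (z, t) := by
      intro s₁
      have hswap : ∫⁻ s₂, ∫⁻ t, F z s₁ t * F z s₂ t = ∫⁻ t, ∫⁻ s₂, F z s₁ t * F z s₂ t := by
        apply lintegral_lintegral_swap
        apply Measurable.aemeasurable
        exact ((hfm.comp (measurable_const.prodMk
          (measurable_const.prodMk measurable_snd))).mul
          (hfm.comp (measurable_const.prodMk
            (measurable_fst.prodMk measurable_snd))))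
      simp only [hG]
      rw [hswap]
      congr 1
      funext t
      have hm2 : Measurable (fun s : ℝ => F z s t) := by
        apply hfm.comp
        exact measurable_const.prodMk (measurable_id.prodMk measurable_const)
      rw [lintegral_const_mul _ hm2]
    calc ∫⁻ s₁, ∫⁻ s₂, G (z, (s₁, s₂)) = ∫⁻ s₁, ∫⁻ t, F z s₁ t * Rf (z, t) := by
          simp only [step1]
      _ = ∫⁻ t, ∫⁻ s₁, F z s₁ t * Rf (z, t) := by
          apply lintegral_lintegral_swap
          apply Measurable.aemeasurable
          exact ((hfm.comp (measurable_const.prodMk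
            (measurable_fst.prodMk measurable_snd))).mul
            ((hRm.comp (measurable_const.prodMk measurable_snd))))
      _ = ∫⁻ t, Rf (z, t) * Rf (z, t) := by
          congr 1
          funext t
          have hm2 : Measurable (fun s : ℝ => F z s t) := by
            apply hfm.comp
            exact measurable_const.prodMk (measurable_id.prodMk measurable_const)
          rw [lintegral_mul_const _ hm2]
  -- hence Rf vanishes a.e.
  have hRae : Rf =ᵐ[μ.prod (volume : Measure ℝ)] 0 := by
    have hzero := (lintegral_eq_zero_iff (f := fun zt => Rf zt * Rf zt) (μ := μ.prod (volume : Measure ℝ)) (hRm.mul hRm)).1 (by rw [← hGrw]; exact hGint)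
    filter_upwards [hzero] with w hw
    exact (mul_self_eq_zero).1 hw
  have hRint : ∫⁻ w, Rf w ∂(μ.prod (volume : Measure ℝ)) = 0 := by
    rw [lintegral_congr_ae hRae]; simp
  -- but ∫ Rf equals the measure of D
  have hDrw : (μ.prod ((volume : Measure ℝ).prod volume)) D
      = ∫⁻ w, Rf w ∂(μ.prod (volume : Measure ℝ)) := by
    have h1 : (μ.prod ((volume : Measure ℝ).prod volume)) D
        = ∫⁻ w, f w ∂(μ.prod ((volume : Measure ℝ).prod volume)) := by
      rw [hf, lintegral_indicator_one hD]
    rw [h1, lintegral_prod _ hfm.aemeasurable, lintegral_prod _ hRm.aemeasurable]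
    congr 1
    funext z
    rw [lintegral_prod]
    swap
    · exact (hfm.comp (measurable_prodMk_left)).aemeasurable
    have hswap : ∫⁻ s, ∫⁻ t, F z s t = ∫⁻ t, ∫⁻ s, F z s t := by
      apply lintegral_lintegral_swap
      exact (hfm.comp (measurable_const.prodMk
        (measurable_fst.prodMk measurable_snd))).aemeasurable
    exact hswap
  exact hpos (by rw [hDrw, hRint])

set_option maxHeartbeats 1000000 in
lemma mvt_contradiction {n m : ℕ} {h : (Fin n → ℝ) × (Fin m → ℝ) → ℝ}
    {Q : Set ((Fin n → ℝ) × (Fin m → ℝ))} (hQ : Convex ℝ Q)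
    {i : Fin n} {j : Fin m} {d₁ d₂ : (Fin n → ℝ) × (Fin m → ℝ) → ℝ}
    (hd₁ : ∀ p ∈ Q, HasDerivAt (fun t => h (Function.update p.1 i t, p.2)) (d₁ p) (p.1 i))
    (hd₂ : ∀ p ∈ Q, HasDerivAt (fun t => d₁ (p.1, Function.update p.2 j t)) (d₂ p) (p.2 j))
    (hd₂0 : ∀ p ∈ Q, d₂ p ≠ 0)
    {u : (Fin n → ℝ) → ℝ} {v : (Fin m → ℝ) → ℝ}
    {x : Fin n → ℝ} {y : Fin m → ℝ} {s₁ s₂ t₁ t₂ : ℝ}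
    (hs : s₁ < s₂) (ht : t₁ < t₂)
    (hmem : ∀ a ∈ ({s₁, s₂} : Set ℝ), ∀ b ∈ ({t₁, t₂} : Set ℝ),
      (Function.update x i a, Function.update y j b) ∈ Q ∧
      h (Function.update x i a, Function.update y j b) =
        u (Function.update x i a) + v (Function.update y j b)) : False := by
  classical
  -- convex combinations of update points
  have combo : ∀ (a b : ℝ), 0 ≤ a → 0 ≤ b → a + b = 1 → ∀ (σ₁ σ₂ τ : ℝ),
      a • ((Function.update x i σ₁ : Fin n → ℝ), (Function.update y j τ : Fin m → ℝ)) +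
      b • ((Function.update x i σ₂ : Fin n → ℝ), (Function.update y j τ : Fin m → ℝ)) =
      (Function.update x i (a * σ₁ + b * σ₂), Function.update y j τ) := by
    intro a b _ _ hab σ₁ σ₂ τ
    refine Prod.ext ?_ ?_
    · funext k
      by_cases hk : k = i
      · subst hk; simp [Function.update_self]
      · simp [Function.update_of_ne hk]
        ring_nf
        nlinarith [congrArg (· * x k) hab]
    · funext k
      simp only [Prod.fst, Prod.snd]
      show a * Function.update y j τ k + b * Function.update y j τ k = Function.update y j τ k
      nlinarith [congrArg (· * Function.update y j τ k) hab]
  have combo2 : ∀ (a b : ℝ), 0 ≤ a → 0 ≤ b → a + b = 1 → ∀ (σ τ₁ τ₂ : ℝ),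
      a • ((Function.update x i σ : Fin n → ℝ), (Function.update y j τ₁ : Fin m → ℝ)) +
      b • ((Function.update x i σ : Fin n → ℝ), (Function.update y j τ₂ : Fin m → ℝ)) =
      (Function.update x i σ, Function.update y j (a * τ₁ + b * τ₂)) := by
    intro a b _ _ hab σ τ₁ τ₂
    refine Prod.ext ?_ ?_
    · funext k
      show a * Function.update x i σ k + b * Function.update x i σ k = Function.update x i σ k
      nlinarith [congrArg (· * Function.update x i σ k) hab]
    · funext k
      by_cases hk : k = j
      · subst hk; simp [Function.update_self]
      · simp [Function.update_of_ne hk]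
        nlinarith [congrArg (· * y k) hab]
  -- membership of the full closed rectangle in Q
  have hmemQ : ∀ σ ∈ Icc s₁ s₂, ∀ τ ∈ Icc t₁ t₂,
      (Function.update x i σ, Function.update y j τ) ∈ Q := by
    intro σ hσ τ hτ
    -- first get (σ, t₁) and (σ, t₂) type memberships via edges
    have edge : ∀ b ∈ ({t₁, t₂} : Set ℝ),
        (Function.update x i σ, Function.update y j b) ∈ Q := by
      intro b hb
      rcases (Convex.mem_Icc hs.le).1 hσ with ⟨a, c, ha, hc, hac, hval⟩
      have m1 := (hmem s₁ (by simp) b hb).1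
      have m2 := (hmem s₂ (by simp) b hb).1
      have := hQ m1 m2 ha hc hac
      rwa [combo a c ha hc hac s₁ s₂ b, hval] at this
    rcases (Convex.mem_Icc ht.le).1 hτ with ⟨a, c, ha, hc, hac, hval⟩
    have m1 := edge t₁ (by simp)
    have m2 := edge t₂ (by simp)
    have := hQ m1 m2 ha hc hac
    rwa [combo2 a c ha hc hac σ t₁ t₂, hval] at this
  -- derivative of ξ ↦ h (update x i ξ, update y j τ)
  have hderiv1 : ∀ σ ∈ Icc s₁ s₂, ∀ τ ∈ Icc t₁ t₂,
      HasDerivAt (fun ξ => h (Function.update x i ξ, Function.update y j τ))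
        (d₁ (Function.update x i σ, Function.update y j τ)) σ := by
    intro σ hσ τ hτ
    have hp := hd₁ _ (hmemQ σ hσ τ hτ)
    simp only at hp
    have e1 : (fun t => h (Function.update (Function.update x i σ) i t, Function.update y j τ))
        = fun t => h (Function.update x i t, Function.update y j τ) := by
      funext t; rw [Function.update_idem]
    rw [e1, Function.update_self] at hp
    exact hp
  have hderiv2 : ∀ σ ∈ Icc s₁ s₂, ∀ τ ∈ Icc t₁ t₂,
      HasDerivAt (fun τ' => d₁ (Function.update x i σ, Function.update y j τ'))
        (d₂ (Function.update x i σ, Function.update y j τ)) τ := by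
    intro σ hσ τ hτ
    have hp := hd₂ _ (hmemQ σ hσ τ hτ)
    simp only at hp
    have e1 : (fun t => d₁ (Function.update x i σ, Function.update (Function.update y j τ) j t))
        = fun t => d₁ (Function.update x i σ, Function.update y j t) := by
      funext t; rw [Function.update_idem]
    rw [e1, Function.update_self] at hp
    exact hp
  -- the difference function φ
  set φ : ℝ → ℝ := fun ξ => h (Function.update x i ξ, Function.update y j t₂) -
      h (Function.update x i ξ, Function.update y j t₁) with hφ
  have hφderiv : ∀ σ ∈ Icc s₁ s₂, HasDerivAt φ
      (d₁ (Function.update x i σ, Function.update y j t₂) -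
       d₁ (Function.update x i σ, Function.update y j t₁)) σ := by
    intro σ hσ
    exact (hderiv1 σ hσ t₂ (by constructor <;> [exact ht.le; exact le_rfl])).sub
      (hderiv1 σ hσ t₁ (by constructor <;> [exact le_rfl; exact ht.le]))
  have hφcont : ContinuousOn φ (Icc s₁ s₂) :=
    fun σ hσ => ((hφderiv σ hσ).continuousAt).continuousWithinAt
  have hφval : φ s₂ - φ s₁ = 0 := by
    have e11 := (hmem s₁ (by simp) t₁ (by simp)).2
    have e12 := (hmem s₁ (by simp) t₂ (by simp)).2
    have e21 := (hmem s₂ (by simp) t₁ (by simp)).2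
    have e22 := (hmem s₂ (by simp) t₂ (by simp)).2
    simp only [hφ]
    rw [e11, e12, e21, e22]; ring
  obtain ⟨ξ, hξ, hslope⟩ := exists_hasDerivAt_eq_slope φ
    (fun σ => d₁ (Function.update x i σ, Function.update y j t₂) -
      d₁ (Function.update x i σ, Function.update y j t₁)) hs hφcont
    (fun σ hσ => hφderiv σ (Ioo_subset_Icc_self hσ))
  rw [show φ s₂ - φ s₁ = 0 from hφval, zero_div] at hslope
  -- now apply MVT in τ
  have hξIcc : ξ ∈ Icc s₁ s₂ := Ioo_subset_Icc_self hξ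
  set ψ : ℝ → ℝ := fun τ => d₁ (Function.update x i ξ, Function.update y j τ) with hψ
  have hψcont : ContinuousOn ψ (Icc t₁ t₂) :=
    fun τ hτ => ((hderiv2 ξ hξIcc τ hτ).continuousAt).continuousWithinAt
  obtain ⟨τ, hτ, hslope2⟩ := exists_hasDerivAt_eq_slope ψ
    (fun τ => d₂ (Function.update x i ξ, Function.update y j τ)) ht hψcont
    (fun τ hτ => hderiv2 ξ hξIcc τ (Ioo_subset_Icc_self hτ))
  have hzero : ψ t₂ - ψ t₁ = 0 := by
    have : ψ t₂ - ψ t₁ = d₁ (Function.update x i ξ, Function.update y j t₂) -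
        d₁ (Function.update x i ξ, Function.update y j t₁) := rfl
    rw [this, hslope]
  rw [hzero, zero_div] at hslope2
  exact hd₂0 _ (hmemQ ξ hξIcc τ (Ioo_subset_Icc_self hτ)) hslope2

set_option maxHeartbeats 1000000 in
lemma update_preimage_pos (n m : ℕ) (i : Fin n) (j : Fin m)
    (B : Set ((Fin n → ℝ) × (Fin m → ℝ))) (hB : MeasurableSet B)
    (hBpos : ((volume : Measure (Fin n → ℝ)).prod (volume : Measure (Fin m → ℝ))) B ≠ 0) :
    (((volume : Measure (Fin n → ℝ)).prod (volume : Measure (Fin m → ℝ))).prod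
      ((volume : Measure ℝ).prod (volume : Measure ℝ)))
      {w : ((Fin n → ℝ) × (Fin m → ℝ)) × (ℝ × ℝ) |
        (Function.update w.1.1 i w.2.1, Function.update w.1.2 j w.2.2) ∈ B} ≠ 0 := by
  set μn := (volume : Measure (Fin n → ℝ))
  set μm := (volume : Measure (Fin m → ℝ))
  set lb := (volume : Measure ℝ)
  have hT₁ := measurePreserving_updateSwap n i
  have hT₂ := measurePreserving_updateSwap m j
  have hT : MeasurePreserving
      (Prod.map (fun q : (Fin n → ℝ) × ℝ => (Function.update q.1 i q.2, q.1 i))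
        (fun q : (Fin m → ℝ) × ℝ => (Function.update q.1 j q.2, q.1 j)))
      ((μn.prod lb).prod (μm.prod lb)) ((μn.prod lb).prod (μm.prod lb)) := hT₁.prod hT₂
  -- reordering maps
  have hσ : MeasurePreserving
      ((MeasurableEquiv.prodAssoc : ((Fin m → ℝ) × ℝ) × ℝ ≃ᵐ (Fin m → ℝ) × (ℝ × ℝ)) ∘
        (Prod.map (Prod.swap : ℝ × (Fin m → ℝ) → (Fin m → ℝ) × ℝ) (id : ℝ → ℝ)) ∘
        ((MeasurableEquiv.prodAssoc : (ℝ × (Fin m → ℝ)) × ℝ ≃ᵐ ℝ × ((Fin m → ℝ) × ℝ)).symm))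
      (lb.prod (μm.prod lb)) (μm.prod (lb.prod lb)) := by
    exact (measurePreserving_prodAssoc _ _ _).comp
      ((Measure.measurePreserving_swap.prod (MeasurePreserving.id _)).comp
        ((measurePreserving_prodAssoc lb μm lb).symm _))
  have hρ : MeasurePreserving
      (fun w : ((Fin n → ℝ) × ℝ) × ((Fin m → ℝ) × ℝ) => ((w.1.1, w.2.1), (w.1.2, w.2.2)))
      ((μn.prod lb).prod (μm.prod lb)) ((μn.prod μm).prod (lb.prod lb)) := by
    have hc := ((measurePreserving_prodAssoc μn μm (lb.prod lb)).symm _).comp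
      (((MeasurePreserving.id μn).prod hσ).comp
        (measurePreserving_prodAssoc μn lb (μm.prod lb)))
    convert hc using 1
    rfl
  have hτ : MeasurePreserving
      ((MeasurableEquiv.prodAssoc : (ℝ × (Fin m → ℝ)) × ℝ ≃ᵐ ℝ × ((Fin m → ℝ) × ℝ)) ∘
        (Prod.map (Prod.swap : (Fin m → ℝ) × ℝ → ℝ × (Fin m → ℝ)) (id : ℝ → ℝ)) ∘
        ((MeasurableEquiv.prodAssoc : ((Fin m → ℝ) × ℝ) × ℝ ≃ᵐ (Fin m → ℝ) × (ℝ × ℝ)).symm))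
      (μm.prod (lb.prod lb)) (lb.prod (μm.prod lb)) := by
    exact (measurePreserving_prodAssoc _ _ _).comp
      ((Measure.measurePreserving_swap.prod (MeasurePreserving.id _)).comp
        ((measurePreserving_prodAssoc μm lb lb).symm _))
  have hρinv : MeasurePreserving
      (fun w : ((Fin n → ℝ) × (Fin m → ℝ)) × (ℝ × ℝ) => ((w.1.1, w.2.1), (w.1.2, w.2.2)))
      ((μn.prod μm).prod (lb.prod lb)) ((μn.prod lb).prod (μm.prod lb)) := by
    have hc := ((measurePreserving_prodAssoc μn lb (μm.prod lb)).symm _).comp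
      (((MeasurePreserving.id μn).prod hτ).comp
        (measurePreserving_prodAssoc μn μm (lb.prod lb)))
    convert hc using 1
    rfl
  have hg : MeasurePreserving
      (fun w : ((Fin n → ℝ) × (Fin m → ℝ)) × (ℝ × ℝ) =>
        ((Function.update w.1.1 i w.2.1, Function.update w.1.2 j w.2.2), (w.1.1 i, w.1.2 j)))
      ((μn.prod μm).prod (lb.prod lb)) ((μn.prod μm).prod (lb.prod lb)) := by
    have hc := hρ.comp (hT.comp hρinv)
    convert hc using 1
    rfl
  have hpre : {w : ((Fin n → ℝ) × (Fin m → ℝ)) × (ℝ × ℝ) |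
        (Function.update w.1.1 i w.2.1, Function.update w.1.2 j w.2.2) ∈ B}
      = (fun w : ((Fin n → ℝ) × (Fin m → ℝ)) × (ℝ × ℝ) =>
        ((Function.update w.1.1 i w.2.1, Function.update w.1.2 j w.2.2), (w.1.1 i, w.1.2 j)))
        ⁻¹' (B ×ˢ (univ : Set (ℝ × ℝ))) := by
    ext w; simp [Set.mem_preimage]
  rw [hpre, hg.measure_preimage (hB.prod MeasurableSet.univ).nullMeasurableSet]
  rw [Measure.prod_prod]
  intro hcontra
  rcases mul_eq_zero.1 hcontra with hz | hz
  · exact hBpos hz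
  · rw [show (univ : Set (ℝ × ℝ)) = (univ : Set ℝ) ×ˢ (univ : Set ℝ) by simp] at hz
    rw [Measure.prod_prod, Real.volume_univ] at hz
    simp at hz

set_option maxHeartbeats 1000000 in
/-- Sufficient condition for non-degeneracy of a cost function on `ℝⁿ × ℝᵐ`: if `η₁, η₂`
are absolutely continuous w.r.t. Lebesgue measure and for `η`-a.e. point some mixed second
partial derivative `∂²h/∂xᵢ∂yⱼ` exists and is nonzero on a neighbourhood, then `h` does
not coincide with a sum `u(x) + v(y)` on any Borel set of positive `η`-measure. -/
theorem nondegenerate_of_coordinate_mixed_derivative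
    (n m : ℕ)
    (η₁ : Measure (Fin n → ℝ)) (η₂ : Measure (Fin m → ℝ))
    [IsProbabilityMeasure η₁] [IsProbabilityMeasure η₂]
    (hη₁ : η₁ ≪ volume) (hη₂ : η₂ ≪ volume)
    (h : (Fin n → ℝ) × (Fin m → ℝ) → ℝ) (hmeas : Measurable h)
    (hd : ∀ᵐ p₀ : (Fin n → ℝ) × (Fin m → ℝ) ∂(η₁.prod η₂),
      ∃ W ∈ nhds p₀, ∃ (i : Fin n) (j : Fin m),
      ∃ d₁ d₂ : (Fin n → ℝ) × (Fin m → ℝ) → ℝ,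
        (∀ p ∈ W, HasDerivAt (fun t => h (Function.update p.1 i t, p.2)) (d₁ p) (p.1 i)) ∧
        (∀ p ∈ W, HasDerivAt (fun t => d₁ (p.1, Function.update p.2 j t)) (d₂ p) (p.2 j)) ∧
        (∀ p ∈ W, d₂ p ≠ 0)) :
    ¬ ∃ (A : Set ((Fin n → ℝ) × (Fin m → ℝ))) (u : (Fin n → ℝ) → ℝ) (v : (Fin m → ℝ) → ℝ),
        MeasurableSet A ∧ 0 < (η₁.prod η₂) A ∧ ∀ p ∈ A, h p = u p.1 + v p.2 := by
  classical
  rintro ⟨A, u, v, hA, hApos, heq⟩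
  set η := η₁.prod η₂ with hη
  -- the local property on a ball
  set P : ((Fin n → ℝ) × (Fin m → ℝ)) → ℚ → Fin n → Fin m → Prop := fun c r i j =>
    ∃ d₁ d₂ : (Fin n → ℝ) × (Fin m → ℝ) → ℝ,
      (∀ p ∈ Metric.ball c (r : ℝ),
        HasDerivAt (fun t => h (Function.update p.1 i t, p.2)) (d₁ p) (p.1 i)) ∧
      (∀ p ∈ Metric.ball c (r : ℝ),
        HasDerivAt (fun t => d₁ (p.1, Function.update p.2 j t)) (d₂ p) (p.2 j)) ∧
      (∀ p ∈ Metric.ball c (r : ℝ), d₂ p ≠ 0) with hP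
  obtain ⟨Dset, hDc, hDd⟩ := TopologicalSpace.exists_countable_dense ((Fin n → ℝ) × (Fin m → ℝ))
  set U : Set ((Fin n → ℝ) × (Fin m → ℝ)) := ⋃ c ∈ Dset, ⋃ r : ℚ, ⋃ i : Fin n, ⋃ j : Fin m,
      ⋃ (_ : P c r i j), Metric.ball c (r : ℝ) with hU
  have hgood : ∀ p₀ : (Fin n → ℝ) × (Fin m → ℝ),
      (∃ W ∈ nhds p₀, ∃ (i : Fin n) (j : Fin m),
      ∃ d₁ d₂ : (Fin n → ℝ) × (Fin m → ℝ) → ℝ,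
        (∀ p ∈ W, HasDerivAt (fun t => h (Function.update p.1 i t, p.2)) (d₁ p) (p.1 i)) ∧
        (∀ p ∈ W, HasDerivAt (fun t => d₁ (p.1, Function.update p.2 j t)) (d₂ p) (p.2 j)) ∧
        (∀ p ∈ W, d₂ p ≠ 0)) → p₀ ∈ U := by
    rintro p₀ ⟨W, hW, i, j, d₁, d₂, h1, h2, h3⟩
    obtain ⟨ε, hε, hball⟩ := Metric.mem_nhds_iff.1 hW
    obtain ⟨c, hcD, hcdist⟩ := hDd.exists_dist_lt p₀ (show (0:ℝ) < ε/4 by linarith)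
    obtain ⟨r, hr1, hr2⟩ := exists_rat_btwn (show dist p₀ c < ε/2 by linarith)
    have hsub : Metric.ball c (r : ℝ) ⊆ W := by
      intro q hq
      apply hball
      rw [Metric.mem_ball] at hq ⊢
      have h3' : dist q p₀ ≤ dist q c + dist c p₀ := dist_triangle _ _ _
      have h4' : dist c p₀ < (r : ℝ) := by rw [dist_comm]; exact hr1
      linarith
    have hPc : P c r i j :=
      ⟨d₁, d₂, fun p hp => h1 p (hsub hp), fun p hp => h2 p (hsub hp),
        fun p hp => h3 p (hsub hp)⟩
    refine Set.mem_biUnion hcD ?_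
    refine Set.mem_iUnion.2 ⟨r, ?_⟩
    refine Set.mem_iUnion.2 ⟨i, ?_⟩
    refine Set.mem_iUnion.2 ⟨j, ?_⟩
    refine Set.mem_iUnion.2 ⟨hPc, ?_⟩
    rw [Metric.mem_ball]
    exact hr1
  -- a.e. every point lies in U
  have hae : ∀ᵐ p ∂η, p ∈ U := by
    filter_upwards [hd] with p hp using hgood p hp
  have hdiff : η (A \ U) = 0 :=
    measure_mono_null (fun p hp => hp.2) (by
      have := hae
      rw [Filter.eventually_iff, mem_ae_iff] at this
      exact (by simpa [compl_setOf] using this : η Uᶜ = 0))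
  have hAU : η (A ∩ U) ≠ 0 := by
    intro hzero
    have : η A ≤ η (A ∩ U) + η (A \ U) := measure_le_inter_add_diff _ _ _
    rw [hzero, hdiff] at this
    simp at this
    exact absurd this (ne_of_gt hApos)
  -- select one ball with positive measure
  have hsel : ∃ c ∈ Dset, ∃ r : ℚ, ∃ i : Fin n, ∃ j : Fin m, P c r i j ∧
      η (A ∩ Metric.ball c (r : ℝ)) ≠ 0 := by
    by_contra hno
    push_neg at hno
    apply hAU
    have hsub : A ∩ U ⊆ ⋃ c ∈ Dset, ⋃ r : ℚ, ⋃ i : Fin n, ⋃ j : Fin m,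
        ⋃ (_ : P c r i j), (A ∩ Metric.ball c (r : ℝ)) := by
      rintro p ⟨hpA, hpU⟩
      simp only [hU, Set.mem_iUnion, Set.mem_iUnion₂] at hpU ⊢
      obtain ⟨c, hc, r, i, j, hPc, hpball⟩ := hpU
      exact ⟨c, hc, r, i, j, hPc, hpA, hpball⟩
    refine measure_mono_null hsub ?_
    refine (measure_biUnion_null_iff hDc).2 ?_
    intro c hc
    refine measure_iUnion_null fun r => ?_
    refine measure_iUnion_null fun i => ?_
    refine measure_iUnion_null fun j => ?_
    refine measure_iUnion_null fun hPc => ?_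
    exact hno c hc r i j hPc
  obtain ⟨c, hcD, r, i, j, hPc, hpos⟩ := hsel
  obtain ⟨d₁, d₂, h1, h2, h3⟩ := hPc
  set Q : Set ((Fin n → ℝ) × (Fin m → ℝ)) := Metric.ball c (r : ℝ) with hQdef
  set B : Set ((Fin n → ℝ) × (Fin m → ℝ)) := A ∩ Q with hB
  have hBmeas : MeasurableSet B := hA.inter Metric.isOpen_ball.measurableSet
  have hQconv : Convex ℝ Q := convex_ball _ _
  -- B has positive volume
  have hac : η ≪ ((volume : Measure (Fin n → ℝ)).prod (volume : Measure (Fin m → ℝ))) :=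
    hη₁.prod hη₂
  have hvol : ((volume : Measure (Fin n → ℝ)).prod (volume : Measure (Fin m → ℝ))) B ≠ 0 :=
    fun hzero => hpos (hac hzero)
  -- rectangle extraction
  set D : Set (((Fin n → ℝ) × (Fin m → ℝ)) × (ℝ × ℝ)) := {w | (Function.update w.1.1 i w.2.1,
      Function.update w.1.2 j w.2.2) ∈ B} with hD
  have hg₀ : Measurable (fun w : ((Fin n → ℝ) × (Fin m → ℝ)) × (ℝ × ℝ) =>
      ((Function.update w.1.1 i w.2.1 : Fin n → ℝ),
       (Function.update w.1.2 j w.2.2 : Fin m → ℝ))) := by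
    apply Measurable.prodMk
    · exact measurable_update'.comp ((measurable_fst.comp measurable_fst).prodMk
        (measurable_fst.comp measurable_snd))
    · exact measurable_update'.comp ((measurable_snd.comp measurable_fst).prodMk
        (measurable_snd.comp measurable_snd))
  have hDmeas : MeasurableSet D := hg₀ hBmeas
  have hDpos := update_preimage_pos n m i j B hBmeas hvol
  obtain ⟨z, s₁, s₂, t₁, t₂, hs12, ht12, m11, m12, m21, m22⟩ :=
    exists_rectangle ((volume : Measure (Fin n → ℝ)).prod (volume : Measure (Fin m → ℝ)))
      D hDmeas hDpos
  set x := z.1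
  set y := z.2
  -- corner facts
  have hcorner : ∀ a, (a = s₁ ∨ a = s₂) → ∀ b, (b = t₁ ∨ b = t₂) →
      (Function.update x i a, Function.update y j b) ∈ Q ∧
      h (Function.update x i a, Function.update y j b) =
        u (Function.update x i a) + v (Function.update y j b) := by
    intro a ha b hb
    have hmemB : (Function.update x i a, Function.update y j b) ∈ B := by
      rcases ha with rfl | rfl <;> rcases hb with rfl | rfl <;> assumption
    exact ⟨hmemB.2, heq _ hmemB.1⟩
  have hcornerSet : ∀ (a₁ a₂ b₁ b₂ : ℝ), ({a₁, a₂} : Set ℝ) ⊆ {s₁, s₂} →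
      ({b₁, b₂} : Set ℝ) ⊆ {t₁, t₂} →
      ∀ a ∈ ({a₁, a₂} : Set ℝ), ∀ b ∈ ({b₁, b₂} : Set ℝ),
      (Function.update x i a, Function.update y j b) ∈ Q ∧
      h (Function.update x i a, Function.update y j b) =
        u (Function.update x i a) + v (Function.update y j b) := by
    intro a₁ a₂ b₁ b₂ hsub1 hsub2 a ha b hb
    have ha' := hsub1 ha
    have hb' := hsub2 hb
    simp only [Set.mem_insert_iff, Set.mem_singleton_iff] at ha' hb'
    exact hcorner a ha' b hb'
  rcases hs12.lt_or_gt with hss | hss <;> rcases ht12.lt_or_gt with htt | htt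
  · exact mvt_contradiction hQconv h1 h2 h3 hss htt
      (hcornerSet s₁ s₂ t₁ t₂ (by simp) (by simp))
  · exact mvt_contradiction hQconv h1 h2 h3 hss htt
      (hcornerSet s₁ s₂ t₂ t₁ (by simp [Set.pair_comm]) (by simp [Set.pair_comm]))
  · exact mvt_contradiction hQconv h1 h2 h3 hss htt
      (hcornerSet s₂ s₁ t₁ t₂ (by simp [Set.pair_comm]) (by simp [Set.pair_comm]))
  · exact mvt_contradiction hQconv h1 h2 h3 hss htt
      (hcornerSet s₂ s₁ t₂ t₁ (by simp [Set.pair_comm]) (by simp [Set.pair_comm]))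
end

section
/- Let X, Y be Souslin spaces, η₁ a non-atomic Borel probability measure on X, η₂ a non-atomic Borel probability measure on Y, and η = η₁ ⊗ η₂. Let h(x,y) = f(x)·g(y), where f : X → ℝ and g : Y → ℝ are Borel measurable functions such that for η₁-almost every x ∈ X the function f is injective on some neighbourhood of x, and for η₂-almost every y ∈ Y the function g is injective on some neighbourhood of y. Then for every set A ⊆ X × Y with η(A) > 0 there exist points x₁, x₂ ∈ X, y₁, y₂ ∈ Y with (x₁,y₁), (x₁,y₂), (x₂,y₁), (x₂,y₂) ∈ A and h(x₁,y₁) + h(x₂,y₂) ≠ h(x₁,y₂) + h(x₂,y₁); in particular, h cannot be written as u(x) + v(y) on any Borel set of positive η-measure. -/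
open MeasureTheory

/-- In a Souslin space, a function that is locally injective around a.e. point of a
non-atomic measure has null level sets. -/
lemma levelset_null_of_souslin {X : Type*} [TopologicalSpace X] [MeasurableSpace X]
    (hX : IsSouslinSpace X) (η : Measure X) [NullSingletonClass η]
    (f : X → ℝ)
    (hfloc : ∀ᵐ x ∂η, ∃ U ∈ nhds x, Set.InjOn f U) (t : ℝ) :
    η (f ⁻¹' {t}) = 0 := by
  obtain ⟨Z, tZ, hP, φ, hφc, hφs⟩ := hX
  set G : Set X := {x | ∃ U ∈ nhds x, Set.InjOn f U} with hG
  set S : Set X := f ⁻¹' {t} ∩ G with hSdef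
  have hScount : S.Countable := by
    have hL : IsLindelof S := by
      letI := tZ
      haveI := hP
      have himg : S = φ '' (φ ⁻¹' S) := (Set.image_preimage_eq S hφs).symm
      rw [himg]
      exact (HereditarilyLindelof_LindelofSets (φ ⁻¹' S)).image hφc
    have hU : ∀ x (hx : x ∈ S), ∃ U ∈ nhds x, Set.InjOn f U := fun x hx => hx.2
    choose U hUmem hUinj using hU
    obtain ⟨c, hcc, hcover⟩ := hL.elim_nhds_subcover' U hUmem
    have : S ⊆ (fun x : S => (x : X)) '' c := by
      intro s hs
      obtain ⟨x, hxc, hsU⟩ := Set.mem_iUnion₂.1 (hcover hs)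
      have hxS : (x : X) ∈ S := x.2
      have hxU : (x : X) ∈ U x x.2 := mem_of_mem_nhds (hUmem x x.2)
      have hfeq : f s = f (x : X) := by
        have h1 : f s = t := hs.1
        have h2 : f (x : X) = t := hxS.1
        rw [h1, h2]
      have : s = (x : X) := hUinj x x.2 hsU hxU hfeq
      exact ⟨x, hxc, this.symm⟩
    exact Set.Countable.mono this (hcc.image _)
  have hGc : η Gᶜ = 0 := by
    have := hfloc
    rw [Filter.Eventually, mem_ae_iff] at this
    exact this
  have hsub : f ⁻¹' {t} ⊆ S ∪ Gᶜ := by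
    intro x hx
    by_cases h : x ∈ G
    · exact Or.inl ⟨hx, h⟩
    · exact Or.inr h
  refine measure_mono_null hsub ?_
  exact measure_union_null (hScount.measure_zero η) hGc

/-- If `h(x,y) = f(x)·g(y)` with `f` locally injective around `η₁`-a.e. point and `g`
locally injective around `η₂`-a.e. point, then every set of positive `η₁ ⊗ η₂`-measure
contains a quadruple violating the degeneracy identity; in particular `h` cannot be
written as `u(x) + v(y)` on any Borel set of positive measure. -/
theorem nondegenerate_of_product_locally_injective
    {X Y : Type*} [TopologicalSpace X] [TopologicalSpace Y]
    [MeasurableSpace X] [BorelSpace X] [MeasurableSpace Y] [BorelSpace Y]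
    (hX : IsSouslinSpace X) (hY : IsSouslinSpace Y)
    (η₁ : Measure X) (η₂ : Measure Y) [IsProbabilityMeasure η₁] [IsProbabilityMeasure η₂]
    [NullSingletonClass η₁] [NullSingletonClass η₂]
    (f : X → ℝ) (g : Y → ℝ) (hf : Measurable f) (hg : Measurable g)
    (hfloc : ∀ᵐ x ∂η₁, ∃ U ∈ nhds x, Set.InjOn f U)
    (hgloc : ∀ᵐ y ∂η₂, ∃ V ∈ nhds y, Set.InjOn g V) :
    (∀ A : Set (X × Y), MeasurableSet A → 0 < (η₁.prod η₂) A →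
      ∃ (x₁ x₂ : X) (y₁ y₂ : Y),
        (x₁, y₁) ∈ A ∧ (x₁, y₂) ∈ A ∧ (x₂, y₁) ∈ A ∧ (x₂, y₂) ∈ A ∧
        f x₁ * g y₁ + f x₂ * g y₂ ≠ f x₁ * g y₂ + f x₂ * g y₁) ∧
    (∀ A : Set (X × Y), MeasurableSet A → 0 < (η₁.prod η₂) A →
      ¬ ∃ (u : X → ℝ) (v : Y → ℝ), ∀ p ∈ A, f p.1 * g p.2 = u p.1 + v p.2) := by
  have hflevel : ∀ t, η₁ (f ⁻¹' {t}) = 0 := levelset_null_of_souslin hX η₁ f hfloc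
  have hglevel : ∀ t, η₂ (g ⁻¹' {t}) = 0 := levelset_null_of_souslin hY η₂ g hgloc
  have main : ∀ A : Set (X × Y), MeasurableSet A → 0 < (η₁.prod η₂) A →
      ∃ (x₁ x₂ : X) (y₁ y₂ : Y),
        (x₁, y₁) ∈ A ∧ (x₁, y₂) ∈ A ∧ (x₂, y₁) ∈ A ∧ (x₂, y₂) ∈ A ∧
        f x₁ * g y₁ + f x₂ * g y₂ ≠ f x₁ * g y₂ + f x₂ * g y₁ := by
    intro A hA hApos
    -- the section function
    set C : Y → Set X := fun y => (fun x => (x, y)) ⁻¹' A with hCdef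
    have hmC : Measurable fun y => η₁ (C y) := measurable_measure_prodMk_right hA
    have hAval : (η₁.prod η₂) A = ∫⁻ y, η₁ (C y) ∂η₂ := Measure.prod_apply_symm hA
    -- the doubled set
    set T : Set ((X × X) × Y) := {p | (p.1.1, p.2) ∈ A ∧ (p.1.2, p.2) ∈ A} with hTdef
    have hT : MeasurableSet T := by
      apply MeasurableSet.inter
      · exact hA.preimage ((measurable_fst.fst).prodMk measurable_snd)
      · exact hA.preimage ((measurable_fst.snd).prodMk measurable_snd)
    have hTsec : ∀ y : Y, ((fun q : X × X => (q, y)) ⁻¹' T) = (C y) ×ˢ (C y) := by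
      intro y; ext q; simp [hTdef, hCdef, Set.mem_prod]
    have hTval : ((η₁.prod η₁).prod η₂) T = ∫⁻ y, η₁ (C y) * η₁ (C y) ∂η₂ := by
      rw [Measure.prod_apply_symm hT]
      refine lintegral_congr fun y => ?_
      rw [hTsec y, Measure.prod_prod]
    have hTpos : ((η₁.prod η₁).prod η₂) T ≠ 0 := by
      intro h0
      rw [hTval, lintegral_eq_zero_iff (f := fun y => η₁ (C y) * η₁ (C y)) (hmC.mul hmC)] at h0
      have hz : (fun y => η₁ (C y)) =ᵐ[η₂] 0 := by
        refine h0.mono fun y hy => ?_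
        have : η₁ (C y) * η₁ (C y) = 0 := hy
        simpa [mul_self_eq_zero] using this
      have : (η₁.prod η₂) A = 0 := by
        rw [hAval, lintegral_congr_ae hz]; simp
      exact absurd this (ne_of_gt hApos)
    -- the diagonal-type null set
    set N : Set (X × X) := {q | f q.1 = f q.2} with hNdef
    have hNmeas : MeasurableSet N :=
      measurableSet_eq_fun (hf.comp measurable_fst) (hf.comp measurable_snd)
    have hNnull : (η₁.prod η₁) N = 0 := by
      rw [Measure.measure_prod_null hNmeas]
      refine Filter.Eventually.of_forall fun x₁ => ?_
      have : (Prod.mk x₁ ⁻¹' N) ⊆ f ⁻¹' {f x₁} := by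
        intro x₂ hx₂
        simp only [hNdef, Set.mem_preimage, Set.mem_setOf_eq] at hx₂
        simp [hx₂.symm]
      exact measure_mono_null this (hflevel (f x₁))
    -- the set of pairs with positively overlapping sections
    set P : Set (X × X) := {q | η₂ (Prod.mk q ⁻¹' T) ≠ 0} with hPdef
    have hPpos : (η₁.prod η₁) P ≠ 0 := by
      intro h0
      have hsecnull : (fun q => η₂ (Prod.mk q ⁻¹' T)) =ᵐ[η₁.prod η₁] 0 := by
        rw [Filter.EventuallyEq, Filter.Eventually, mem_ae_iff]
        refine measure_mono_null ?_ h0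
        intro q hq
        simpa [hPdef] using hq
      have : ((η₁.prod η₁).prod η₂) T = 0 := by
        rw [Measure.prod_apply hT, lintegral_congr_ae hsecnull]; simp
      exact hTpos this
    have hPN : (η₁.prod η₁) (P \ N) ≠ 0 := by
      intro h0
      have : (η₁.prod η₁) P = 0 := by
        have hsub : P ⊆ (P \ N) ∪ N := by
          intro q hq
          by_cases h : q ∈ N
          · exact Or.inr h
          · exact Or.inl ⟨hq, h⟩
        exact measure_mono_null hsub (measure_union_null h0 hNnull)
      exact hPpos this
    obtain ⟨⟨x₁, x₂⟩, hqP, hqN⟩ := nonempty_of_measure_ne_zero hPN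
    have hfx : f x₁ ≠ f x₂ := hqN
    set W : Set Y := Prod.mk (x₁, x₂) ⁻¹' T with hWdef
    have hWpos : η₂ W ≠ 0 := hqP
    obtain ⟨y₁, hy₁⟩ := nonempty_of_measure_ne_zero hWpos
    have hW2 : η₂ (W \ g ⁻¹' {g y₁}) ≠ 0 := by
      rw [measure_diff_null (hglevel (g y₁))]
      exact hWpos
    obtain ⟨y₂, hy₂W, hy₂g⟩ := nonempty_of_measure_ne_zero hW2
    have hgy : g y₁ ≠ g y₂ := fun h => hy₂g (by simp [h.symm])
    have h11 : (x₁, y₁) ∈ A := hy₁.1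
    have h21 : (x₂, y₁) ∈ A := hy₁.2
    have h12 : (x₁, y₂) ∈ A := hy₂W.1
    have h22 : (x₂, y₂) ∈ A := hy₂W.2
    refine ⟨x₁, x₂, y₁, y₂, h11, h12, h21, h22, ?_⟩
    intro h
    have hz : (f x₁ - f x₂) * (g y₁ - g y₂) = 0 := by linear_combination h
    rcases mul_eq_zero.1 hz with h' | h'
    · exact hfx (sub_eq_zero.1 h')
    · exact hgy (sub_eq_zero.1 h')
  refine ⟨main, ?_⟩
  intro A hA hApos ⟨u, v, huv⟩
  obtain ⟨x₁, x₂, y₁, y₂, h11, h12, h21, h22, hne⟩ := main A hA hApos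
  apply hne
  have e11 := huv (x₁, y₁) h11
  have e12 := huv (x₁, y₂) h12
  have e21 := huv (x₂, y₁) h21
  have e22 := huv (x₂, y₂) h22
  simp only at e11 e12 e21 e22
  rw [e11, e12, e21, e22]
  ring
end
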